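/- arXiv:1808.06864 — 6 statements merged into one kernel-verified Lean document; each statement's English description precedes it below -/
import Mathlib

section
/- If H is a 3-graph on n vertices with δ₂(H) > (n−3)/2, then all the edges of H belong to a single tight component; that is, any two edges of H are related under the transitive closure of the touching relation. -/
/-- Two edges of a 3-graph with edge set `E` *touch* if they both lie in `E` and
intersect in exactly two vertices. -/
def Touches {V : Type*} [DecidableEq V] (E : Finset (Finset V)) (e f : Finset V) : Prop :=
  e ∈ E ∧ f ∈ E ∧ (e ∩ f).card = 2

section Aux

variable {V : Type*} [Fintype V] [DecidableEq V]

lemma third_vertex {e : Finset V} (hc : e.card = 3) {x y : V} (hx : x ∈ e) (hy : y ∈ e)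
    (hxy : x ≠ y) : ∃ w, w ≠ x ∧ w ≠ y ∧ e = {x, y, w} := by
  have hsub : ({x, y} : Finset V) ⊆ e := by
    intro a ha
    simp only [Finset.mem_insert, Finset.mem_singleton] at ha
    rcases ha with rfl | rfl <;> assumption
  have hcd : (e \ {x, y}).card = 1 := by
    rw [Finset.card_sdiff_of_subset hsub, hc, Finset.card_insert_of_notMem (by simp [hxy]),
      Finset.card_singleton]
  obtain ⟨w, hw⟩ := Finset.card_eq_one.mp hcd
  have hwmem : w ∈ e \ ({x, y} : Finset V) := hw ▸ Finset.mem_singleton_self w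
  rw [Finset.mem_sdiff, Finset.mem_insert, Finset.mem_singleton] at hwmem
  obtain ⟨hwe, hw2⟩ := hwmem
  push_neg at hw2
  obtain ⟨hwx, hwy⟩ := hw2
  refine ⟨w, hwx, hwy, ?_⟩
  have hsub2 : ({x, y, w} : Finset V) ⊆ e := by
    intro a ha
    simp only [Finset.mem_insert, Finset.mem_singleton] at ha
    rcases ha with rfl | rfl | rfl <;> assumption
  have hc2 : ({x, y, w} : Finset V).card = 3 := by
    rw [Finset.card_insert_of_notMem (by simp [hxy, hwx.symm]),
      Finset.card_insert_of_notMem (by simp [hwy.symm]), Finset.card_singleton]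
  exact (Finset.eq_of_subset_of_card_le hsub2 (by rw [hc, hc2])).symm

lemma lemA (E : Finset (Finset V)) (hcard : ∀ e ∈ E, e.card = 3)
    {x y : V} (hxy : x ≠ y) {e f : Finset V} (he : e ∈ E) (hf : f ∈ E)
    (hxe : x ∈ e) (hye : y ∈ e) (hxf : x ∈ f) (hyf : y ∈ f) :
    Relation.ReflTransGen (Touches E) e f := by
  rcases eq_or_ne e f with rfl | hne
  · exact .refl
  · refine Relation.ReflTransGen.single ⟨he, hf, ?_⟩
    have h2 : 2 ≤ (e ∩ f).card := by
      have hsub : ({x, y} : Finset V) ⊆ e ∩ f := by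
        intro a ha
        simp only [Finset.mem_insert, Finset.mem_singleton] at ha
        rcases ha with rfl | rfl <;> simp [Finset.mem_inter, *]
      calc 2 = ({x, y} : Finset V).card := by
            rw [Finset.card_insert_of_notMem (by simp [hxy]), Finset.card_singleton]
        _ ≤ _ := Finset.card_le_card hsub
    have h3 : (e ∩ f).card ≤ 3 := by
      have := Finset.card_le_card (Finset.inter_subset_left : e ∩ f ⊆ e)
      rw [hcard e he] at this
      exact this
    have hne3 : (e ∩ f).card ≠ 3 := by
      intro h
      have heq : e ∩ f = e :=
        Finset.eq_of_subset_of_card_le Finset.inter_subset_left (by rw [h, hcard e he])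
      have hef : e ⊆ f := by rw [← heq]; exact Finset.inter_subset_right
      exact hne (Finset.eq_of_subset_of_card_le hef (by rw [hcard e he, hcard f hf]))
    omega

lemma lemB (E : Finset (Finset V)) (hcard : ∀ e ∈ E, e.card = 3)
    (hδ : ∀ x y : V, x ≠ y →
      ((Fintype.card V : ℝ) - 3) / 2 < ((E.filter fun e => x ∈ e ∧ y ∈ e).card : ℝ))
    {x y z : V} (hxy : x ≠ y) (hxz : x ≠ z) (hyz : y ≠ z)
    {e f : Finset V} (he : e ∈ E) (hf : f ∈ E) (hxe : x ∈ e) (hye : y ∈ e)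
    (hxf : x ∈ f) (hzf : z ∈ f) : Relation.ReflTransGen (Touches E) e f := by
  by_cases hxyz : ({x, y, z} : Finset V) ∈ E
  · have h1 := lemA E hcard hxy he hxyz hxe hye (by simp) (by simp)
    have h2 := lemA E hcard hxz hxyz hf (by simp) (by simp) hxf hzf
    exact h1.trans h2
  · have hn : 3 ≤ Fintype.card V := by
      have := Finset.card_le_univ e
      rw [hcard e he] at this
      exact this
    set A := Finset.univ.filter
      (fun w => w ∉ ({x, y, z} : Finset V) ∧ ({x, y, w} : Finset V) ∈ E) with hA
    set B := Finset.univ.filter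
      (fun w => w ∉ ({x, y, z} : Finset V) ∧ ({x, z, w} : Finset V) ∈ E) with hB
    have hSA : E.filter (fun e => x ∈ e ∧ y ∈ e)
        ⊆ A.image (fun w => ({x, y, w} : Finset V)) := by
      intro g hg
      rw [Finset.mem_filter] at hg
      obtain ⟨hgE, hxg, hyg⟩ := hg
      obtain ⟨w, hwx, hwy, hgw⟩ := third_vertex (hcard g hgE) hxg hyg hxy
      have hwz : w ≠ z := by
        rintro rfl
        exact hxyz (hgw ▸ hgE)
      refine Finset.mem_image.mpr ⟨w, ?_, hgw.symm⟩
      rw [hA, Finset.mem_filter]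
      refine ⟨Finset.mem_univ w, ?_, hgw ▸ hgE⟩
      simp [hwx, hwy, hwz]
    have hSB : E.filter (fun e => x ∈ e ∧ z ∈ e)
        ⊆ B.image (fun w => ({x, z, w} : Finset V)) := by
      intro g hg
      rw [Finset.mem_filter] at hg
      obtain ⟨hgE, hxg, hzg⟩ := hg
      obtain ⟨w, hwx, hwz, hgw⟩ := third_vertex (hcard g hgE) hxg hzg hxz
      have hwy : w ≠ y := by
        rintro rfl
        apply hxyz
        have heq : ({x, w, z} : Finset V) = ({x, z, w} : Finset V) := by
          ext a
          simp only [Finset.mem_insert, Finset.mem_singleton]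
          tauto
        rw [heq]
        exact hgw ▸ hgE
      refine Finset.mem_image.mpr ⟨w, ?_, hgw.symm⟩
      rw [hB, Finset.mem_filter]
      refine ⟨Finset.mem_univ w, ?_, hgw ▸ hgE⟩
      simp [hwx, hwy, hwz]
    have hcA : ((Fintype.card V : ℝ) - 3) / 2 < (A.card : ℝ) := by
      refine (hδ x y hxy).trans_le ?_
      exact_mod_cast (Finset.card_le_card hSA).trans (Finset.card_image_le)
    have hcB : ((Fintype.card V : ℝ) - 3) / 2 < (B.card : ℝ) := by
      refine (hδ x z hxz).trans_le ?_
      exact_mod_cast (Finset.card_le_card hSB).trans (Finset.card_image_le)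
    have hsum : (Fintype.card V : ℝ) - 3 < (A.card : ℝ) + (B.card : ℝ) := by linarith
    have hsumN : Fintype.card V - 3 < A.card + B.card := by
      have h' : Fintype.card V < A.card + B.card + 3 := by
        exact_mod_cast (show (Fintype.card V : ℝ) < ((A.card + B.card + 3 : ℕ) : ℝ) by
          push_cast; linarith)
      omega
    have hunion : (A ∪ B).card ≤ Fintype.card V - 3 := by
      have hsub : A ∪ B ⊆ Finset.univ \ ({x, y, z} : Finset V) := by
        intro w hw
        rw [Finset.mem_union] at hw
        rw [Finset.mem_sdiff]
        refine ⟨Finset.mem_univ w, ?_⟩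
        rcases hw with hw | hw
        · exact ((Finset.mem_filter.mp hw).2).1
        · exact ((Finset.mem_filter.mp hw).2).1
      have hcd : (Finset.univ \ ({x, y, z} : Finset V)).card = Fintype.card V - 3 := by
        rw [Finset.card_sdiff_of_subset (Finset.subset_univ _), Finset.card_univ,
          Finset.card_insert_of_notMem (by simp [hxy, hxz]),
          Finset.card_insert_of_notMem (by simp [hyz]), Finset.card_singleton]
      exact hcd ▸ Finset.card_le_card hsub
    have hinter : (A ∩ B).Nonempty := by
      rw [← Finset.card_pos]
      have := Finset.card_union_add_card_inter A B
      omega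
    obtain ⟨w, hw⟩ := hinter
    rw [Finset.mem_inter] at hw
    obtain ⟨hwA, hwB⟩ := hw
    rw [hA, Finset.mem_filter] at hwA
    rw [hB, Finset.mem_filter] at hwB
    obtain ⟨-, hwxyz, he1⟩ := hwA
    obtain ⟨-, -, he2⟩ := hwB
    simp only [Finset.mem_insert, Finset.mem_singleton] at hwxyz
    push_neg at hwxyz
    obtain ⟨hwx, hwy, hwz⟩ := hwxyz
    have htouch : Touches E ({x, y, w} : Finset V) ({x, z, w} : Finset V) := by
      refine ⟨he1, he2, ?_⟩
      have : ({x, y, w} : Finset V) ∩ ({x, z, w} : Finset V) = {x, w} := by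
        ext a
        simp only [Finset.mem_inter, Finset.mem_insert, Finset.mem_singleton]
        constructor
        · rintro ⟨rfl | rfl | rfl, h2⟩ <;> tauto
        · rintro (rfl | rfl) <;> tauto
      rw [this, Finset.card_insert_of_notMem (by simp [hwx.symm]), Finset.card_singleton]
    have h1 := lemA E hcard hxy he he1 hxe hye (by simp) (by simp)
    have h2 := lemA E hcard hxz he2 hf (by simp) (by simp) hxf hzf
    exact (h1.trans (Relation.ReflTransGen.single htouch)).trans h2

lemma lemC (E : Finset (Finset V)) (hcard : ∀ e ∈ E, e.card = 3)
    (hδ : ∀ x y : V, x ≠ y →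
      ((Fintype.card V : ℝ) - 3) / 2 < ((E.filter fun e => x ∈ e ∧ y ∈ e).card : ℝ))
    {a : V} {e f : Finset V} (he : e ∈ E) (hf : f ∈ E) (hae : a ∈ e) (haf : a ∈ f) :
    Relation.ReflTransGen (Touches E) e f := by
  obtain ⟨b, hbe, hba⟩ := Finset.exists_mem_ne (by rw [hcard e he]; norm_num) a
  obtain ⟨c, hcf, hca⟩ := Finset.exists_mem_ne (by rw [hcard f hf]; norm_num) a
  rcases eq_or_ne b c with rfl | hbc
  · exact lemA E hcard (Ne.symm hba) he hf hae hbe haf hcf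
  · exact lemB E hcard hδ (Ne.symm hba) (Ne.symm hca) hbc he hf hae hbe haf hcf

end Aux

/-- if `H` is a 3-graph on `n` vertices with `δ₂(H) > (n-3)/2`, then all the
edges of `H` belong to a single tight component, i.e. any two edges are related under the
reflexive-transitive closure of the touching relation. -/
theorem statement1 {V : Type*} [Fintype V] [DecidableEq V]
    (E : Finset (Finset V)) (hcard : ∀ e ∈ E, e.card = 3)
    (hδ : ∀ x y : V, x ≠ y →
      ((Fintype.card V : ℝ) - 3) / 2 < ((E.filter fun e => x ∈ e ∧ y ∈ e).card : ℝ)) :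
    ∀ e ∈ E, ∀ f ∈ E, Relation.ReflTransGen (Touches E) e f := by
  intro e he f hf
  have hn : 3 ≤ Fintype.card V := by
    have := Finset.card_le_univ e
    rw [hcard e he] at this
    exact this
  by_cases hef : (e ∩ f).Nonempty
  · obtain ⟨a, ha⟩ := hef
    rw [Finset.mem_inter] at ha
    exact lemC E hcard hδ he hf ha.1 ha.2
  · obtain ⟨a, ha⟩ := Finset.card_pos.mp (by rw [hcard e he]; norm_num : 0 < e.card)
    obtain ⟨x, hx⟩ := Finset.card_pos.mp (by rw [hcard f hf]; norm_num : 0 < f.card)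
    have hax : a ≠ x := by
      rintro rfl
      exact hef ⟨a, Finset.mem_inter.mpr ⟨ha, hx⟩⟩
    have hdeg := hδ a x hax
    have h0 : (0 : ℝ) ≤ ((Fintype.card V : ℝ) - 3) / 2 := by
      have : (3 : ℝ) ≤ (Fintype.card V : ℝ) := by exact_mod_cast hn
      linarith
    have hpos : 0 < (E.filter fun g => a ∈ g ∧ x ∈ g).card := by
      exact_mod_cast h0.trans_lt hdeg
    obtain ⟨g, hg⟩ := Finset.card_pos.mp hpos
    rw [Finset.mem_filter] at hg
    obtain ⟨hgE, hag, hxg⟩ := hg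
    exact (lemC E hcard hδ he hgE ha hag).trans (lemC E hcard hδ hgE hf hxg hx)
end

section
/- For each integer n ≥ 5, there exists a 3-graph H on n vertices with δ₂(H) = ⌊(n−3)/2⌋ whose edge set decomposes into exactly two tight components. (Such a 3-graph is obtained by taking disjoint vertex sets X of size ⌊n/2⌋ and Y of size ⌈n/2⌉ and letting the edges be all triples meeting Y in an odd number of vertices.) -/
open Finset

def cY (n : ℕ) (e : Finset (Fin n)) : ℕ := (e.filter (fun v => n / 2 ≤ v.val)).card

def Egraph (n : ℕ) : Finset (Finset (Fin n)) :=
  (Finset.univ.powersetCard 3).filter (fun e => Odd (cY n e))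

lemma mem_Egraph {n : ℕ} {e : Finset (Fin n)} :
    e ∈ Egraph n ↔ e.card = 3 ∧ Odd (cY n e) := by
  simp [Egraph, Finset.mem_powersetCard_univ]

lemma cY_split {n : ℕ} (e f : Finset (Fin n)) :
    cY n e = cY n (e ∩ f) + cY n (e \ f) := by
  unfold cY
  rw [← Finset.card_union_of_disjoint, ← Finset.filter_union, show e ∩ f ∪ e \ f = e from sup_inf_sdiff e f]
  exact Finset.disjoint_filter_filter
    (Finset.disjoint_left.mpr fun x hx hx' => (Finset.mem_sdiff.mp hx').2 (Finset.mem_inter.mp hx).2)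

lemma cY_le_card {n : ℕ} (e : Finset (Fin n)) : cY n e ≤ e.card :=
  Finset.card_filter_le _ _

lemma touches_cY {n : ℕ} {e f : Finset (Fin n)} (h : Touches (Egraph n) e f) :
    cY n e = cY n f := by
  obtain ⟨he, hf, hcap⟩ := h
  obtain ⟨hce, hoe⟩ := mem_Egraph.mp he
  obtain ⟨hcf, hof⟩ := mem_Egraph.mp hf
  have h1 : (e \ f).card = 1 := by
    have := Finset.card_sdiff_add_card_inter e f
    omega
  have h2 : (f \ e).card = 1 := by
    have := Finset.card_sdiff_add_card_inter f e
    rw [Finset.inter_comm] at this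
    omega
  have s1 := cY_split e f
  have s2 := cY_split f e
  rw [Finset.inter_comm] at s2
  have l1 : cY n (e \ f) ≤ 1 := h1 ▸ cY_le_card _
  have l2 : cY n (f \ e) ≤ 1 := h2 ▸ cY_le_card _
  obtain ⟨a, ha⟩ := hoe
  obtain ⟨b, hb⟩ := hof
  omega

lemma connect {n : ℕ} : ∀ (k : ℕ) (e f : Finset (Fin n)), e ∈ Egraph n → f ∈ Egraph n →
    cY n e = cY n f → (f \ e).card = k →
    Relation.ReflTransGen (Touches (Egraph n)) e f := by
  intro k
  induction k with
  | zero =>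
    intro e f he hf hc h0
    have hsub : f ⊆ e := by
      rwa [Finset.card_eq_zero, Finset.sdiff_eq_empty_iff_subset] at h0
    have : f = e := Finset.eq_of_subset_of_card_le hsub
      (by rw [(mem_Egraph.mp he).1, (mem_Egraph.mp hf).1])
    exact this ▸ Relation.ReflTransGen.refl
  | succ k ih =>
    intro e f he hf hc hk
    obtain ⟨hce, hoe⟩ := mem_Egraph.mp he
    obtain ⟨hcf, hof⟩ := mem_Egraph.mp hf
    -- |e \ f| = |f \ e|
    have hAB : (e \ f).card = (f \ e).card := by
      have h1 := Finset.card_sdiff_add_card_inter e f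
      have h2 := Finset.card_sdiff_add_card_inter f e
      rw [Finset.inter_comm] at h2
      omega
    -- cY on the sdiffs agree
    have hcd : cY n (e \ f) = cY n (f \ e) := by
      have s1 := cY_split e f
      have s2 := cY_split f e
      rw [Finset.inter_comm] at s2
      omega
    -- choose v ∈ f \ e, w ∈ e \ f with matching predicate
    have hBne : (f \ e).Nonempty := Finset.card_pos.mp (by omega)
    obtain ⟨v, hv, w, hw, hpvw⟩ :
        ∃ v ∈ f \ e, ∃ w ∈ e \ f, ((n/2 ≤ v.val) ↔ (n/2 ≤ w.val)) := by
      by_cases hB : ((f \ e).filter (fun v => n/2 ≤ v.val)).Nonempty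
      · obtain ⟨v, hv⟩ := hB
        have : ((e \ f).filter (fun v => n/2 ≤ v.val)).Nonempty := by
          apply Finset.card_pos.mp
          have : 0 < cY n (f \ e) := Finset.card_pos.mpr ⟨v, hv⟩
          unfold cY at *
          omega
        obtain ⟨w, hw⟩ := this
        rw [Finset.mem_filter] at hv hw
        exact ⟨v, hv.1, w, hw.1, by simp [hv.2, hw.2]⟩
      · obtain ⟨v, hv⟩ := hBne
        have hAne : (e \ f).Nonempty := Finset.card_pos.mp (by omega)
        obtain ⟨w, hw⟩ := hAne
        have hnv : ¬ (n/2 ≤ v.val) := fun h => hB ⟨v, Finset.mem_filter.mpr ⟨hv, h⟩⟩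
        have hB0 : cY n (f \ e) = 0 := by
          unfold cY; rw [Finset.card_eq_zero, Finset.filter_eq_empty_iff]
          intro x hx
          exact fun h => hB ⟨x, Finset.mem_filter.mpr ⟨hx, h⟩⟩
        have hnw : ¬ (n/2 ≤ w.val) := by
          have h0 : cY n (e \ f) = 0 := by omega
          unfold cY at h0
          rw [Finset.card_eq_zero, Finset.filter_eq_empty_iff] at h0
          exact h0 hw
        exact ⟨v, hv, w, hw, by simp [hnv, hnw]⟩
    rw [Finset.mem_sdiff] at hv hw
    obtain ⟨hvf, hve⟩ := hv
    obtain ⟨hwe, hwf⟩ := hw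
    set e' : Finset (Fin n) := insert v (e.erase w) with he'def
    have hvne : v ∉ e.erase w := fun h => hve (Finset.mem_of_mem_erase h)
    have hce' : e'.card = 3 := by
      rw [he'def, Finset.card_insert_of_notMem hvne, Finset.card_erase_of_mem hwe, hce]
    have hcyE' : cY n e' = cY n e := by
      unfold cY
      rw [he'def, Finset.filter_insert, Finset.filter_erase]
      by_cases hpv : n/2 ≤ v.val
      · have hpw : n/2 ≤ w.val := hpvw.mp hpv
        rw [if_pos hpv]
        have hvnotin : v ∉ (Finset.filter (fun v => n/2 ≤ v.val) e).erase w :=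
          fun h => hve (Finset.mem_of_mem_filter _ (Finset.mem_of_mem_erase h))
        rw [Finset.card_insert_of_notMem hvnotin,
          Finset.card_erase_of_mem (Finset.mem_filter.mpr ⟨hwe, hpw⟩)]
        have : 0 < (Finset.filter (fun v => n/2 ≤ v.val) e).card :=
          Finset.card_pos.mpr ⟨w, Finset.mem_filter.mpr ⟨hwe, hpw⟩⟩
        omega
      · have hpw : ¬ n/2 ≤ w.val := fun h => hpv (hpvw.mpr h)
        have hwni : w ∉ Finset.filter (fun v : Fin n => n/2 ≤ v.val) e :=
          fun h => hpw (Finset.mem_filter.mp h).2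
        rw [if_neg hpv, Finset.erase_eq_of_notMem hwni]
    have he'mem : e' ∈ Egraph n := mem_Egraph.mpr ⟨hce', hcyE' ▸ hoe⟩
    have hinter : e ∩ e' = e.erase w := by
      ext x
      simp only [he'def, Finset.mem_inter, Finset.mem_insert, Finset.mem_erase]
      constructor
      · rintro ⟨hxe, hx | hx⟩
        · exact absurd (hx ▸ hxe) hve
        · exact ⟨hx.1, hxe⟩
      · rintro ⟨hxw, hxe⟩
        exact ⟨hxe, Or.inr ⟨hxw, hxe⟩⟩
    have htouch : Touches (Egraph n) e e' := by
      refine ⟨he, he'mem, ?_⟩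
      rw [hinter, Finset.card_erase_of_mem hwe, hce]
    have hfd : f \ e' = (f \ e).erase v := by
      ext x
      simp only [he'def, Finset.mem_sdiff, Finset.mem_insert, Finset.mem_erase, not_or,
        Finset.mem_sdiff]
      constructor
      · rintro ⟨hxf, hxv, hx⟩
        exact ⟨hxv, hxf, fun hxe => hx ⟨fun hxw : x = w => hwf (hxw ▸ hxf), hxe⟩⟩
      · rintro ⟨hxv, hxf, hxe⟩
        exact ⟨hxf, hxv, fun h => hxe h.2⟩
    have hkd : (f \ e').card = k := by
      rw [hfd, Finset.card_erase_of_mem (Finset.mem_sdiff.mpr ⟨hvf, hve⟩), hk]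
      omega
    exact Relation.ReflTransGen.head htouch
      (ih e' f he'mem hf (hcyE'.trans hc) hkd)

lemma cY_triple {n : ℕ} {x y z : Fin n} (hxy : x ≠ y) (hxz : x ≠ z) (hyz : y ≠ z) :
    cY n {x, y, z} = (if n/2 ≤ x.val then 1 else 0) + (if n/2 ≤ y.val then 1 else 0)
      + (if n/2 ≤ z.val then 1 else 0) := by
  unfold cY
  rw [Finset.filter_insert, Finset.filter_insert, Finset.filter_singleton]
  split_ifs <;>
    simp_all [Finset.card_insert_of_notMem, Finset.mem_insert, Finset.mem_singleton, hxy, hxz, hyz]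

lemma card_triple {n : ℕ} {x y z : Fin n} (hxy : x ≠ y) (hxz : x ≠ z) (hyz : y ≠ z) :
    ({x, y, z} : Finset (Fin n)).card = 3 := by
  rw [Finset.card_insert_of_notMem (by simp [hxy, hxz]),
    Finset.card_insert_of_notMem (by simp [hyz]), Finset.card_singleton]

lemma deg_eq {n : ℕ} (x y : Fin n) (hxy : x ≠ y) :
    ((Egraph n).filter fun e => x ∈ e ∧ y ∈ e).card
      = (Finset.univ.filter fun z : Fin n =>
          z ≠ x ∧ z ≠ y ∧ Odd (cY n {x, y, z})).card := by
  symm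
  apply Finset.card_bij (fun z _ => ({x, y, z} : Finset (Fin n)))
  · intro z hz
    rw [Finset.mem_filter] at hz
    obtain ⟨-, hzx, hzy, hodd⟩ := hz
    refine Finset.mem_filter.mpr ⟨mem_Egraph.mpr ⟨card_triple hxy (Ne.symm hzx) (Ne.symm hzy), hodd⟩,
      by simp, by simp⟩
  · intro z₁ hz₁ z₂ hz₂ heq
    rw [Finset.mem_filter] at hz₁ hz₂
    have : z₁ ∈ ({x, y, z₂} : Finset (Fin n)) := heq ▸ (by simp : z₁ ∈ ({x, y, z₁} : Finset (Fin n)))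
    simp only [Finset.mem_insert, Finset.mem_singleton] at this
    rcases this with h | h | h
    · exact absurd h hz₁.2.1
    · exact absurd h hz₁.2.2.1
    · exact h
  · intro e he
    rw [Finset.mem_filter] at he
    obtain ⟨heE, hxe, hye⟩ := he
    obtain ⟨hce, hoe⟩ := mem_Egraph.mp heE
    have hsub : ({x, y} : Finset (Fin n)) ⊆ e := by
      intro a ha
      simp only [Finset.mem_insert, Finset.mem_singleton] at ha
      rcases ha with h | h <;> simp [h, hxe, hye]
    have hcard2 : ({x, y} : Finset (Fin n)).card = 2 := by
      rw [Finset.card_insert_of_notMem (by simp [hxy]), Finset.card_singleton]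
    have h1 : (e \ {x, y}).card = 1 := by
      rw [Finset.card_sdiff_of_subset hsub, hce, hcard2]
    obtain ⟨z, hz⟩ := Finset.card_eq_one.mp h1
    have hze : z ∈ e \ ({x, y} : Finset (Fin n)) := hz ▸ Finset.mem_singleton_self z
    rw [Finset.mem_sdiff, Finset.mem_insert, Finset.mem_singleton] at hze
    obtain ⟨hzine, hznot⟩ := hze
    push_neg at hznot
    have heeq : e = {x, y, z} := by
      apply (Finset.eq_of_subset_of_card_le _ _).symm
      · intro a ha
        simp only [Finset.mem_insert, Finset.mem_singleton] at ha
        rcases ha with h | h | h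
        · exact h ▸ hxe
        · exact h ▸ hye
        · exact h ▸ hzine
      · rw [hce, card_triple hxy (Ne.symm hznot.1) (Ne.symm hznot.2)]
    refine ⟨z, Finset.mem_filter.mpr ⟨Finset.mem_univ z, hznot.1, hznot.2, ?_⟩, heeq.symm⟩
    rw [← heeq]; exact hoe

lemma card_Yset {n : ℕ} : (Finset.univ.filter fun v : Fin n => n/2 ≤ v.val).card = n - n/2 := by
  rw [← Nat.card_Ico (n/2) n]
  apply Finset.card_bij (fun v _ => v.val)
  · intro v hv
    rw [Finset.mem_filter] at hv
    exact Finset.mem_Ico.mpr ⟨hv.2, v.isLt⟩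
  · intro v₁ _ v₂ _ h
    exact Fin.val_injective h
  · intro m hm
    rw [Finset.mem_Ico] at hm
    exact ⟨⟨m, hm.2⟩, Finset.mem_filter.mpr ⟨Finset.mem_univ _, hm.1⟩, rfl⟩

lemma card_Xset {n : ℕ} :
    (Finset.univ.filter fun v : Fin n => ¬ n/2 ≤ v.val).card = n/2 := by
  have h := Finset.card_filter_add_card_filter_not
    (s := (Finset.univ : Finset (Fin n))) (p := fun v => n/2 ≤ v.val)
  rw [card_Yset, Finset.card_univ, Fintype.card_fin] at h
  have : n/2 ≤ n := Nat.div_le_self n 2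
  omega

lemma degYY {n : ℕ} {x y : Fin n} (hxy : x ≠ y) (hx : n/2 ≤ x.val) (hy : n/2 ≤ y.val) :
    ((Egraph n).filter fun e => x ∈ e ∧ y ∈ e).card = n - n/2 - 2 := by
  rw [deg_eq x y hxy]
  have hset : (Finset.univ.filter fun z : Fin n => z ≠ x ∧ z ≠ y ∧ Odd (cY n {x, y, z}))
      = ((Finset.univ.filter fun v : Fin n => n/2 ≤ v.val).erase x).erase y := by
    ext z
    simp only [Finset.mem_filter, Finset.mem_erase, Finset.mem_univ, true_and]
    constructor
    · rintro ⟨hzx, hzy, hodd⟩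
      rw [cY_triple hxy (Ne.symm hzx) (Ne.symm hzy), if_pos hx, if_pos hy] at hodd
      refine ⟨hzy, hzx, ?_⟩
      by_cases hz : n/2 ≤ z.val
      · exact hz
      · rw [if_neg hz, Nat.odd_iff] at hodd; omega
    · rintro ⟨hzy, hzx, hz⟩
      refine ⟨hzx, hzy, ?_⟩
      rw [cY_triple hxy (Ne.symm hzx) (Ne.symm hzy), if_pos hx, if_pos hy, if_pos hz]
      decide
  have hxmem : x ∈ (Finset.univ.filter fun v : Fin n => n/2 ≤ v.val) :=
    Finset.mem_filter.mpr ⟨Finset.mem_univ _, hx⟩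
  have hymem : y ∈ (Finset.univ.filter fun v : Fin n => n/2 ≤ v.val).erase x :=
    Finset.mem_erase.mpr ⟨hxy.symm, Finset.mem_filter.mpr ⟨Finset.mem_univ _, hy⟩⟩
  rw [hset, Finset.card_erase_of_mem hymem, Finset.card_erase_of_mem hxmem, card_Yset]
  omega

lemma degXX {n : ℕ} {x y : Fin n} (hxy : x ≠ y) (hx : ¬ n/2 ≤ x.val) (hy : ¬ n/2 ≤ y.val) :
    ((Egraph n).filter fun e => x ∈ e ∧ y ∈ e).card = n - n/2 := by
  rw [deg_eq x y hxy]
  have hset : (Finset.univ.filter fun z : Fin n => z ≠ x ∧ z ≠ y ∧ Odd (cY n {x, y, z}))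
      = Finset.univ.filter fun v : Fin n => n/2 ≤ v.val := by
    ext z
    simp only [Finset.mem_filter, Finset.mem_univ, true_and]
    constructor
    · rintro ⟨hzx, hzy, hodd⟩
      rw [cY_triple hxy (Ne.symm hzx) (Ne.symm hzy), if_neg hx, if_neg hy] at hodd
      by_cases hz : n/2 ≤ z.val
      · exact hz
      · rw [if_neg hz, Nat.odd_iff] at hodd; omega
    · intro hz
      have hzx : z ≠ x := fun h => hx (h ▸ hz)
      have hzy : z ≠ y := fun h => hy (h ▸ hz)
      refine ⟨hzx, hzy, ?_⟩
      rw [cY_triple hxy (Ne.symm hzx) (Ne.symm hzy), if_neg hx, if_neg hy, if_pos hz]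
      decide
  rw [hset, card_Yset]

lemma degXY {n : ℕ} {x y : Fin n} (hxy : x ≠ y) (hx : ¬ n/2 ≤ x.val) (hy : n/2 ≤ y.val) :
    ((Egraph n).filter fun e => x ∈ e ∧ y ∈ e).card = n/2 - 1 := by
  rw [deg_eq x y hxy]
  have hset : (Finset.univ.filter fun z : Fin n => z ≠ x ∧ z ≠ y ∧ Odd (cY n {x, y, z}))
      = (Finset.univ.filter fun v : Fin n => ¬ n/2 ≤ v.val).erase x := by
    ext z
    simp only [Finset.mem_filter, Finset.mem_erase, Finset.mem_univ, true_and]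
    constructor
    · rintro ⟨hzx, hzy, hodd⟩
      rw [cY_triple hxy (Ne.symm hzx) (Ne.symm hzy), if_neg hx, if_pos hy] at hodd
      refine ⟨hzx, ?_⟩
      by_cases hz : n/2 ≤ z.val
      · rw [if_pos hz, Nat.odd_iff] at hodd; omega
      · exact hz
    · rintro ⟨hzx, hz⟩
      have hzy : z ≠ y := fun h => hz (h ▸ hy)
      refine ⟨hzx, hzy, ?_⟩
      rw [cY_triple hxy (Ne.symm hzx) (Ne.symm hzy), if_neg hx, if_pos hy, if_neg hz]
      decide
  have hxmem : x ∈ (Finset.univ.filter fun v : Fin n => ¬ n/2 ≤ v.val) :=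
    Finset.mem_filter.mpr ⟨Finset.mem_univ _, hx⟩
  rw [hset, Finset.card_erase_of_mem hxmem, card_Xset]

lemma rtg_cY {n : ℕ} {a b : Finset (Fin n)}
    (h : Relation.ReflTransGen (Touches (Egraph n)) a b) : cY n a = cY n b := by
  induction h with
  | refl => rfl
  | tail _ ht ih => exact ih.trans (touches_cY ht)


/-- for each `n ≥ 5` there is a 3-graph on `n` vertices with minimum codegree
exactly `⌊(n-3)/2⌋` whose edge set decomposes into exactly two tight components. -/
theorem statement2 (n : ℕ) (hn : 5 ≤ n) :
    ∃ E : Finset (Finset (Fin n)),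
      (∀ e ∈ E, e.card = 3) ∧
      (∀ x y : Fin n, x ≠ y → (n - 3) / 2 ≤ (E.filter fun e => x ∈ e ∧ y ∈ e).card) ∧
      (∃ x y : Fin n, x ≠ y ∧ (E.filter fun e => x ∈ e ∧ y ∈ e).card = (n - 3) / 2) ∧
      ∃ e₁ ∈ E, ∃ e₂ ∈ E, ¬ Relation.ReflTransGen (Touches E) e₁ e₂ ∧
        ∀ g ∈ E, Relation.ReflTransGen (Touches E) g e₁ ∨
          Relation.ReflTransGen (Touches E) g e₂ := by

  refine ⟨Egraph n, fun e he => (mem_Egraph.mp he).1, ?_, ?_, ?_⟩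
  · intro x y hxy
    by_cases hx : n/2 ≤ x.val <;> by_cases hy : n/2 ≤ y.val
    · rw [degYY hxy hx hy]; omega
    · rw [show ((Egraph n).filter fun e => x ∈ e ∧ y ∈ e)
          = ((Egraph n).filter fun e => y ∈ e ∧ x ∈ e) from
          Finset.filter_congr fun e _ => and_comm,
        degXY hxy.symm hy hx]
      omega
    · rw [degXY hxy hx hy]; omega
    · rw [degXX hxy hx hy]; omega
  · refine ⟨⟨n-2, by omega⟩, ⟨n-1, by omega⟩, Fin.ne_of_val_ne (by simp; omega), ?_⟩
    rw [degYY (Fin.ne_of_val_ne (by simp; omega)) (by simp; omega) (by simp; omega)]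
    omega
  · set a0 : Fin n := ⟨0, by omega⟩
    set a1 : Fin n := ⟨1, by omega⟩
    set b0 : Fin n := ⟨n-3, by omega⟩
    set b1 : Fin n := ⟨n-2, by omega⟩
    set b2 : Fin n := ⟨n-1, by omega⟩
    have h01 : a0 ≠ a1 := Fin.ne_of_val_ne (by simp [a0, a1])
    have h02 : a0 ≠ b2 := Fin.ne_of_val_ne (by simp [a0, b2]; omega)
    have h12 : a1 ≠ b2 := Fin.ne_of_val_ne (by simp [a1, b2]; omega)
    have hb01 : b0 ≠ b1 := Fin.ne_of_val_ne (by simp [b0, b1]; omega)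
    have hb02 : b0 ≠ b2 := Fin.ne_of_val_ne (by simp [b0, b2]; omega)
    have hb12 : b1 ≠ b2 := Fin.ne_of_val_ne (by simp [b1, b2]; omega)
    have hpa0 : ¬ n/2 ≤ a0.val := by simp [a0]; omega
    have hpa1 : ¬ n/2 ≤ a1.val := by simp [a1]; omega
    have hpb0 : n/2 ≤ b0.val := by simp [b0]; omega
    have hpb1 : n/2 ≤ b1.val := by simp [b1]; omega
    have hpb2 : n/2 ≤ b2.val := by simp [b2]; omega
    set e₁ : Finset (Fin n) := {a0, a1, b2}
    set e₂ : Finset (Fin n) := {b0, b1, b2}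
    have hc1 : cY n e₁ = 1 := by
      rw [cY_triple h01 h02 h12, if_neg hpa0, if_neg hpa1, if_pos hpb2]
    have hc2 : cY n e₂ = 3 := by
      rw [cY_triple hb01 hb02 hb12, if_pos hpb0, if_pos hpb1, if_pos hpb2]
    have he₁ : e₁ ∈ Egraph n := mem_Egraph.mpr ⟨card_triple h01 h02 h12, by rw [hc1]; decide⟩
    have he₂ : e₂ ∈ Egraph n := mem_Egraph.mpr ⟨card_triple hb01 hb02 hb12, by rw [hc2]; decide⟩
    refine ⟨e₁, he₁, e₂, he₂, ?_, ?_⟩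
    · intro h
      have := rtg_cY h
      rw [hc1, hc2] at this
      omega
    · intro g hg
      obtain ⟨hcg, hog⟩ := mem_Egraph.mp hg
      have hle : cY n g ≤ 3 := hcg ▸ cY_le_card g
      rw [Nat.odd_iff] at hog
      rcases (by omega : cY n g = 1 ∨ cY n g = 3) with h | h
      · exact Or.inl (connect _ g e₁ hg he₁ (by rw [h, hc1]) rfl)
      · exact Or.inr (connect _ g e₂ hg he₂ (by rw [h, hc2]) rfl)
end

section
/- For each integer n ≥ 6, there exists a 3-graph H on n vertices with δ₂(H) = ⌊n/3⌋ − 1 such that every tight component of H spans at most 2⌈n/3⌉ vertices; that is, for every tight component T of H, the set of vertices contained in some edge of T has size at most 2⌈n/3⌉. (Such a 3-graph is obtained by partitioning the vertices into sets X, Y, Z with sizes as equal as possible and taking as edges all triples with two vertices in X and one in Y, two in Y and one in Z, or two in Z and one in X.) -/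
/-!
Colour the vertices by their residue mod 3 and take as edges the triples whose multiset of
colours is `cyclicPattern i` for some `i : ZMod 3`. The colours of any two vertices of an edge
already determine `i`, so `i` is constant on a tight component, which therefore spans only the
colour classes `i` and `i + 1`. For every pair `x, y` there is a class `j` all of whose vertices
other than `x, y` complete the pair to an edge; for a pair coloured `i, i + 1` these are exactly
the other vertices of class `i`, and class `2` has only `⌊n/3⌋` vertices.
-/

open Finset

theorem card_filter_mem_mem_eq_card_filter_insert {V : Type*} [Fintype V] [DecidableEq V]
    {E : Finset (Finset V)} (hE : ∀ e ∈ E, e.card = 3) {x y : V} (hxy : x ≠ y) :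
    #{e ∈ E | x ∈ e ∧ y ∈ e} = #{w | w ≠ x ∧ w ≠ y ∧ {w, x, y} ∈ E} := by
  symm
  refine card_bij (fun w _ => {w, x, y}) (by simp +contextual) ?_ ?_
  · intro w₁ hw₁ w₂ _ h
    have : w₁ ∈ ({w₂, x, y} : Finset V) := h ▸ mem_insert_self _ _
    simp_all
  · intro e he
    obtain ⟨heE, hxe, hye⟩ := mem_filter.1 he
    have hsub : {x, y} ⊆ e := by simp [insert_subset_iff, hxe, hye]
    obtain ⟨w, hw⟩ : ∃ w, e \ {x, y} = {w} := by
      rw [← card_eq_one, card_sdiff_of_subset hsub, hE e heE, card_pair hxy]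
    have hwe : e = {w, x, y} := by
      rw [← sdiff_union_of_subset hsub, hw, singleton_union]
    have hw' : w ∈ e \ {x, y} := hw ▸ mem_singleton_self w
    simp only [mem_sdiff, mem_insert, mem_singleton, not_or] at hw'
    exact ⟨w, by simp [hw'.2, ← hwe, heE], hwe.symm⟩

def cyclicPattern (i : ZMod 3) : Multiset (ZMod 3) := {i, i, i + 1}

theorem exists_insert_insert_eq_cyclicPattern (a b : ZMod 3) :
    ∃ j, (a ≠ j ∨ b ≠ j) ∧ ∃ i, {j, a, b} = cyclicPattern i := by
  revert a b; decide

theorem exists_insert_eq_cyclicPattern_iff (a i : ZMod 3) :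
    (∃ k, {a, i, i + 1} = cyclicPattern k) ↔ a = i := by
  revert a i; decide

theorem eq_of_pair_le_cyclicPattern {a b i j : ZMod 3} (hi : {a, b} ≤ cyclicPattern i)
    (hj : {a, b} ≤ cyclicPattern j) : i = j := by
  revert a b i j; decide

section CyclicTripleGraph

variable {V : Type*} [Fintype V] (c : V → ZMod 3)

def cyclicTripleGraph : Finset (Finset V) :=
  {e | ∃ i, e.val.map c = cyclicPattern i}

variable {c}

theorem mem_cyclicTripleGraph {e : Finset V} :
    e ∈ cyclicTripleGraph c ↔ ∃ i, e.val.map c = cyclicPattern i := by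
  simp [cyclicTripleGraph]

theorem card_of_mem_cyclicTripleGraph {e : Finset V} (he : e ∈ cyclicTripleGraph c) :
    e.card = 3 := by
  obtain ⟨i, hi⟩ := mem_cyclicTripleGraph.1 he
  simpa [cyclicPattern] using congrArg Multiset.card hi

theorem insert_mem_cyclicTripleGraph_iff [DecidableEq V] {w x y : V} (hwx : w ≠ x) (hwy : w ≠ y)
    (hxy : x ≠ y) :
    {w, x, y} ∈ cyclicTripleGraph c ↔
      ∃ i, {c w, c x, c y} = cyclicPattern i := by
  rw [mem_cyclicTripleGraph, insert_val_of_notMem (by simp [hwx, hwy]),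
    insert_val_of_notMem (by simp [hxy])]
  rfl

theorem exists_card_colorClass_sub_one_le_codegree [DecidableEq V] {x y : V} (hxy : x ≠ y) :
    ∃ j, #{v | c v = j} - 1 ≤ #{e ∈ cyclicTripleGraph c | x ∈ e ∧ y ∈ e} := by
  obtain ⟨j, hxyj, hj⟩ := exists_insert_insert_eq_cyclicPattern (c x) (c y)
  refine ⟨j, ?_⟩
  rw [card_filter_mem_mem_eq_card_filter_insert (fun _ => card_of_mem_cyclicTripleGraph) hxy]
  have hclass : #{v | c v = j} ≤ #{w | w ≠ x ∧ w ≠ y ∧ c w = j} + 1 := by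
    rcases hxyj with h | h
    · calc _ ≤ #(insert y ({w | w ≠ x ∧ w ≠ y ∧ c w = j} : Finset V)) :=
            card_le_card fun v hv => by grind
        _ ≤ _ := card_insert_le _ _
    · calc _ ≤ #(insert x ({w | w ≠ x ∧ w ≠ y ∧ c w = j} : Finset V)) :=
            card_le_card fun v hv => by grind
        _ ≤ _ := card_insert_le _ _
  have hapex : #{w | w ≠ x ∧ w ≠ y ∧ c w = j} ≤
      #{w | w ≠ x ∧ w ≠ y ∧ {w, x, y} ∈ cyclicTripleGraph c} := by
    refine card_le_card fun w hw => ?_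
    obtain ⟨hwx, hwy, rfl⟩ := (mem_filter.1 hw).2
    simpa [hwx, hwy, insert_mem_cyclicTripleGraph_iff hwx hwy hxy] using hj
  omega

theorem codegree_eq_of_apply_eq_add_one [DecidableEq V] {x y : V} (hy : c y = c x + 1) :
    #{e ∈ cyclicTripleGraph c | x ∈ e ∧ y ∈ e} = #{v | c v = c x} - 1 := by
  have hcy : c y ≠ c x := by simp [hy]
  have hxy : x ≠ y := fun h => hcy (h ▸ rfl)
  rw [card_filter_mem_mem_eq_card_filter_insert (fun _ => card_of_mem_cyclicTripleGraph) hxy,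
    ← card_erase_of_mem (s := {v | c v = c x}) (a := x) (by simp)]
  congr 1
  ext w
  simp only [mem_filter, mem_erase, mem_univ, true_and]
  by_cases hwx : w = x
  · simp [hwx]
  by_cases hwy : w = y
  · simp [hwy, hcy]
  rw [insert_mem_cyclicTripleGraph_iff hwx hwy hxy, hy, exists_insert_eq_cyclicPattern_iff]
  tauto

theorem map_eq_cyclicPattern_of_touches [DecidableEq V] {e f : Finset V} {i : ZMod 3}
    (hef : Touches (cyclicTripleGraph c) e f) (he : e.val.map c = cyclicPattern i) :
    f.val.map c = cyclicPattern i := by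
  obtain ⟨-, hf, hcard⟩ := hef
  obtain ⟨j, hj⟩ := mem_cyclicTripleGraph.1 hf
  obtain ⟨u, v, huv, huv_eq⟩ := card_eq_two.1 hcard
  have hpair {s : Finset V} (hs : e ∩ f ⊆ s) : {c u, c v} ≤ s.val.map c := by
    have := Multiset.map_le_map (f := c) (val_le_iff.2 hs)
    rwa [huv_eq, insert_val_of_notMem (by simpa using huv)] at this
  have hue := he ▸ hpair inter_subset_left
  have huf := hj ▸ hpair inter_subset_right
  rw [hj, eq_of_pair_le_cyclicPattern hue huf]

theorem ncard_tightComponent_span_le [DecidableEq V] {e : Finset V} {i : ZMod 3}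
    (he : e.val.map c = cyclicPattern i) :
    {v | ∃ f ∈ cyclicTripleGraph c, Relation.ReflTransGen (Touches (cyclicTripleGraph c)) e f ∧
      v ∈ f}.ncard ≤ #{v | c v = i} + #{v | c v = i + 1} := by
  calc _ ≤ (({v | c v = i ∨ c v = i + 1} : Finset V) : Set V).ncard := by
        refine Set.ncard_le_ncard ?_ (Finset.finite_toSet _)
        rintro v ⟨f, -, hef, hvf⟩
        have hf : f.val.map c = cyclicPattern i :=
          hef.rec he fun _ htouch hpat => map_eq_cyclicPattern_of_touches htouch hpat
        have hv : c v ∈ cyclicPattern i := hf ▸ Multiset.mem_map_of_mem c hvf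
        simpa [cyclicPattern] using hv
    _ ≤ _ := by
        rw [Set.ncard_coe_finset, filter_or]
        exact card_union_le _ _

end CyclicTripleGraph

theorem Fin.card_filter_val_eq_count (n : ℕ) (p : ℕ → Prop) [DecidablePred p] :
    #{v : Fin n | p v} = Nat.count p n := by
  rw [Nat.count_eq_card_filter_range, ← card_map Fin.valEmbedding, map_filter',
    ← Nat.Iio_eq_range, ← Fin.map_valEmbedding_univ]
  congr 1
  ext k
  simp only [mem_filter, mem_map, mem_univ, true_and, Fin.valEmbedding_apply]
  constructor
  · rintro ⟨⟨v, rfl⟩, a, ha, hav⟩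
    exact ⟨⟨v, rfl⟩, Fin.val_injective hav ▸ ha⟩
  · rintro ⟨⟨v, rfl⟩, hv⟩
    exact ⟨⟨v, rfl⟩, v, hv, rfl⟩

theorem Fin.card_filter_natCast_val_eq (n : ℕ) (r : ZMod 3) :
    #{v : Fin n | ((v : ℕ) : ZMod 3) = r} = n / 3 + if r.val < n % 3 then 1 else 0 := by
  rw [← Nat.mod_eq_of_lt (ZMod.val_lt r), ← Nat.count_modEq_card n (by norm_num) r.val,
    ← Fin.card_filter_val_eq_count]
  congr! 2 with v
  rw [← ZMod.natCast_zmod_val r, ZMod.natCast_eq_natCast_iff', ZMod.val_natCast]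
  simp [Nat.ModEq]

/-- for each `n ≥ 6` there is a 3-graph on `n` vertices with minimum codegree
exactly `⌊n/3⌋ - 1` in which every tight component spans at most `2⌈n/3⌉` vertices. -/
theorem statement4 (n : ℕ) (hn : 6 ≤ n) :
    ∃ E : Finset (Finset (Fin n)),
      (∀ e ∈ E, e.card = 3) ∧
      (∀ x y : Fin n, x ≠ y → n / 3 - 1 ≤ (E.filter fun e => x ∈ e ∧ y ∈ e).card) ∧
      (∃ x y : Fin n, x ≠ y ∧ (E.filter fun e => x ∈ e ∧ y ∈ e).card = n / 3 - 1) ∧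
      ∀ e ∈ E,
        ({v : Fin n | ∃ f ∈ E, Relation.ReflTransGen (Touches E) e f ∧ v ∈ f}).ncard
          ≤ 2 * ((n + 2) / 3) := by
  set c : Fin n → ZMod 3 := fun v => ((v : ℕ) : ZMod 3)
  have hclass (r : ZMod 3) : n / 3 ≤ #{v | c v = r} ∧ #{v | c v = r} ≤ (n + 2) / 3 := by
    rw [Fin.card_filter_natCast_val_eq]
    split_ifs <;> omega
  refine ⟨cyclicTripleGraph c, fun _ => card_of_mem_cyclicTripleGraph, fun x y hxy => ?_, ?_,
    fun e he => ?_⟩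
  · obtain ⟨j, hj⟩ := exists_card_colorClass_sub_one_le_codegree (c := c) hxy
    exact (Nat.sub_le_sub_right (hclass j).1 1).trans hj
  · refine ⟨⟨2, by omega⟩, ⟨3, by omega⟩, by simp, ?_⟩
    rw [codegree_eq_of_apply_eq_add_one (by simp [c]; decide), Fin.card_filter_natCast_val_eq]
    have h2 : ¬(2 : ZMod 3).val < n % 3 := by change ¬2 < n % 3; omega
    simp [c, h2]
  · obtain ⟨i, hi⟩ := mem_cyclicTripleGraph.1 he
    have hspan := ncard_tightComponent_span_le hi
    have := hclass i
    have := hclass (i + 1)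
    omega
end

section
/- For every μ > 0 there exists n₀ such that every 3-graph H on n ≥ n₀ vertices with δ₂(H) ≥ (3/4 + μ)n contains a spanning double pyramid: there are two distinct vertices x, y of H and an ordering v₁, …, v_{n−2} of the remaining n−2 vertices such that for every i (indices taken modulo n−2) both {x, v_i, v_{i+1}} and {y, v_i, v_{i+1}} are edges of H. -/
/-!
Any two distinct vertices `x, y` can serve as apexes. Call `uw` an edge of the common link of `x`
and `y` when both `xuw` and `yuw` are edges. For a vertex `u`, the third vertices of the edges
through `xu` and through `yu` form two sets of at least `3n/4` vertices each, so they share at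
least `n/2` vertices: the common link, a graph on `n - 2` vertices, has minimum degree at least
half its order. By Dirac's theorem it has a Hamiltonian cycle, the base of the double pyramid.

Dirac's theorem follows Pósa: the neighbours of the ends `a, b` of a longest path all lie on it,
so by pigeonhole the path splits as `p ++ q` with `a` adjacent to the first vertex of `q` and `b`
to the last vertex of `p`, which closes `p ++ q.reverse` into a cycle. A vertex off that cycle
could have no neighbour on it (that would give a longer path), which the degree bound forbids.
-/

open Finset Function

variable {α : Type*}

namespace Cycle

theorem Chain.isChain {r : α → α → Prop} {l : List α} (h : Chain r (l : Cycle α)) :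
    l.IsChain r := by
  cases l with
  | nil => exact List.IsChain.nil
  | cons a t => exact List.IsChain.left_of_append (l₂ := [a]) ((chain_coe_cons r a t).1 h)

theorem Chain.rel_getElem_mod {r : α → α → Prop} {l : List α} (h : Chain r (l : Cycle α))
    (k : ℕ) (hk : k < l.length) : r l[k] (l[(k + 1) % l.length]'(Nat.mod_lt _ (by omega))) := by
  have hl : l ≠ [] := List.ne_nil_of_length_pos (by omega)
  have h' := List.isChain_iff_getElem.1 ((chain_ne_nil r hl).1 h)
  rcases Nat.lt_or_ge (k + 1) l.length with hlt | hge
  · have := h' (k + 1) (by simpa using hlt)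
    simp only [List.getElem_cons_succ] at this
    simpa only [Nat.mod_eq_of_lt hlt] using this
  · obtain rfl : k = l.length - 1 := by omega
    have hmod : (l.length - 1 + 1) % l.length = 0 := by
      rw [Nat.sub_add_cancel (by omega), Nat.mod_self]
    simp only [hmod]
    simpa [List.getLast_eq_getElem] using h' 0 (by simp; omega)

end Cycle

theorem List.Nodup.exists_bijective_zmod_of_cycleChain {r : α → α → Prop} {l : List α}
    (hnd : l.Nodup) (hmem : ∀ a, a ∈ l) (hl : l ≠ []) (h : Cycle.Chain r (l : Cycle α)) :
    ∃ v : ZMod l.length → α, Bijective v ∧ ∀ i, r (v i) (v (i + 1)) := by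
  have : NeZero l.length := ⟨by simpa using hl⟩
  refine ⟨fun i => l[i.val]'(ZMod.val_lt i),
    ⟨fun i j hij => ZMod.val_injective _ (hnd.getElem_inj_iff.1 hij), fun a => ?_⟩, fun i => ?_⟩
  · obtain ⟨k, hk, rfl⟩ := List.mem_iff_getElem.1 (hmem a)
    exact ⟨k, by simp [ZMod.val_natCast, Nat.mod_eq_of_lt hk]⟩
  · have hval : (i + 1).val = (i.val + 1) % l.length := by
      rw [ZMod.val_add, ZMod.val_one_eq_one_mod, Nat.add_mod_mod]
    simpa only [hval] using h.rel_getElem_mod i.val (ZMod.val_lt i)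

theorem List.exists_append_eq_of_length_le_card_add_card [DecidableEq α] {l : List α}
    (hl : l ≠ []) {S T : Finset α} (hS : ∀ w ∈ S, w ∈ l) (hT : ∀ w ∈ T, w ∈ l)
    (hhead : l.head hl ∉ S) (hlast : l.getLast hl ∉ T) (hcard : l.length ≤ #S + #T) :
    ∃ p q : List α, ∃ (hp : p ≠ []) (hq : q ≠ []),
      l = p ++ q ∧ q.head hq ∈ S ∧ p.getLast hp ∈ T := by
  have hidx {w : α} (hw : w ∈ l) : l.idxOf w < l.length := List.idxOf_lt_length_iff.2 hw
  have hA : S.image l.idxOf ⊆ Finset.Ico 1 l.length := by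
    simp only [subset_iff, Finset.mem_image, Finset.mem_Ico]
    rintro _ ⟨w, hw, rfl⟩
    refine ⟨Nat.pos_of_ne_zero fun h0 => hhead ?_, hidx (hS w hw)⟩
    simpa [List.head_eq_getElem, ← h0, List.getElem_idxOf] using hw
  have hB : T.image (l.idxOf · + 1) ⊆ Finset.Ico 1 l.length := by
    simp only [subset_iff, Finset.mem_image, Finset.mem_Ico]
    rintro _ ⟨w, hw, rfl⟩
    refine ⟨by omega, lt_of_le_of_ne (hidx (hT w hw)) fun hL => hlast ?_⟩
    simpa [List.getLast_eq_getElem, ← hL, List.getElem_idxOf] using hw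
  have hcardA : #(S.image l.idxOf) = #S :=
    card_image_of_injOn fun w hw _ _ h => (List.idxOf_inj (hS w hw)).1 h
  have hcardB : #(T.image (l.idxOf · + 1)) = #T :=
    card_image_of_injOn fun w hw _ _ h => (List.idxOf_inj (hT w hw)).1 (by simpa using h)
  obtain ⟨i, hi⟩ := inter_nonempty_of_card_lt_card_add_card hA hB
    (by rw [hcardA, hcardB, Nat.card_Ico]; have := List.length_pos_of_ne_nil hl; omega)
  simp only [mem_inter, mem_image] at hi
  obtain ⟨⟨w, hwS, rfl⟩, w', hw'T, hw'⟩ := hi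
  have hwl := hidx (hS w hwS)
  refine ⟨l.take (l.idxOf w), l.drop (l.idxOf w), by simp [hl]; omega, by simp; omega,
    (List.take_append_drop _ _).symm, by simpa [List.head_drop] using hwS, ?_⟩
  simpa [List.getLast_take, ← hw', List.getElem?_idxOf (hT w' hw'T)] using hw'T

theorem List.IsChain.cycleChain_append_reverse {r : α → α → Prop} [Std.Symm r]
    {p q : List α} (hp : p ≠ []) (hq : q ≠ []) (h : (p ++ q).IsChain r)
    (h₁ : r (p.head hp) (q.head hq)) (h₂ : r (p.getLast hp) (q.getLast hq)) :
    Cycle.Chain r ((p ++ q.reverse : List α) : Cycle α) := by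
  have hne : p ++ q.reverse ≠ [] := by simp [hp]
  rw [Cycle.chain_ne_nil r hne, List.getLast_append_of_ne_nil hne (by simpa using hq),
    List.getLast_reverse, List.isChain_cons, List.isChain_append]
  refine ⟨?_, h.left_of_append,
    List.isChain_reverse.2 (h.right_of_append.imp fun _ _ hab => symm_of r hab), ?_⟩
  · simpa [List.head?_eq_some_head hp] using symm_of r h₁
  · simpa [List.getLast?_eq_some_getLast hp, List.head?_reverse,
      List.getLast?_eq_some_getLast hq] using h₂

structure IsLongestPath (r : α → α → Prop) (l : List α) : Prop where
  nodup : l.Nodup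
  isChain : l.IsChain r
  length_le : ∀ l' : List α, l'.Nodup → l'.IsChain r → l'.length ≤ l.length

theorem exists_isLongestPath [Fintype α] (r : α → α → Prop) : ∃ l, IsLongestPath r l := by
  classical
  let P k := ∃ l : List α, l.Nodup ∧ l.IsChain r ∧ l.length = k
  obtain ⟨l, hnd, hc, hlen⟩ : P (Nat.findGreatest P (Fintype.card α)) :=
    Nat.findGreatest_spec (Nat.zero_le _) ⟨[], List.nodup_nil, List.IsChain.nil, rfl⟩
  exact ⟨l, ⟨hnd, hc, fun l' hnd' hc' =>
    hlen ▸ Nat.le_findGreatest hnd'.length_le_card ⟨l', hnd', hc', rfl⟩⟩⟩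

namespace IsLongestPath

variable {r : α → α → Prop} {l : List α}

theorem of_length_eq (h : IsLongestPath r l) {l' : List α} (hnd : l'.Nodup) (hc : l'.IsChain r)
    (hlen : l'.length = l.length) : IsLongestPath r l' :=
  ⟨hnd, hc, fun l'' h₁ h₂ => hlen ▸ h.length_le l'' h₁ h₂⟩

theorem reverse [Std.Symm r] (h : IsLongestPath r l) : IsLongestPath r l.reverse :=
  h.of_length_eq (List.nodup_reverse.2 h.nodup)
    (List.isChain_reverse.2 (h.isChain.imp fun _ _ hab => symm_of r hab))
    l.length_reverse

theorem mem_of_rel_head (h : IsLongestPath r l) (hl : l ≠ []) {w : α} (hw : r w (l.head hl)) :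
    w ∈ l := by
  by_contra hwl
  have := h.length_le (w :: l) (List.nodup_cons.2 ⟨hwl, h.nodup⟩)
    (List.isChain_cons.2 ⟨by simpa [List.head?_eq_some_head hl] using hw, h.isChain⟩)
  simp at this

theorem mem_of_rel_of_cycleChain (h : IsLongestPath r l) (hc : Cycle.Chain r (l : Cycle α))
    {u w : α} (hu : u ∈ l) (hw : r w u) : w ∈ l := by
  obtain ⟨s, t, rfl⟩ := List.append_of_mem hu
  have hrot : s ++ u :: t ~r (u :: t) ++ s := List.isRotated_append
  have h' : IsLongestPath r (u :: t ++ s) :=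
    h.of_length_eq (hrot.nodup_iff.1 h.nodup) (Cycle.coe_eq_coe.2 hrot ▸ hc).isChain
      (by simp; omega)
  exact hrot.perm.mem_iff.2 (h'.mem_of_rel_head (List.cons_ne_nil _ _) hw)

end IsLongestPath

namespace SimpleGraph

variable [Fintype α] [DecidableEq α] {G : SimpleGraph α} [DecidableRel G.Adj]

theorem mem_of_isLongestPath_of_cycleChain (hdeg : ∀ a, Fintype.card α ≤ 2 * G.degree a)
    {l : List α} (hl : IsLongestPath G.Adj l) (hc : Cycle.Chain G.Adj (l : Cycle α)) (w : α) :
    w ∈ l := by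
  by_contra hw
  obtain ⟨a, ha⟩ : ∃ a, a ∈ l := List.exists_mem_of_ne_nil l fun h0 => by
    simpa [h0] using hl.length_le [w] (List.nodup_singleton w) (List.isChain_singleton w)
  have hdeg_a : G.degree a + 1 ≤ l.length := by
    rw [← card_neighborFinset_eq_degree, ← List.toFinset_card_of_nodup hl.nodup,
      ← card_erase_add_one (List.mem_toFinset.2 ha)]
    refine Nat.add_le_add_right (card_le_card fun z hz => ?_) 1
    rw [mem_neighborFinset] at hz
    simp [hz.ne', hl.mem_of_rel_of_cycleChain hc ha hz.symm]
  have hdisj : Disjoint (insert w (G.neighborFinset w)) l.toFinset := by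
    simp only [Finset.disjoint_left, Finset.mem_insert, mem_neighborFinset, List.mem_toFinset]
    rintro z (rfl | hz) hzl
    exacts [hw hzl, hw (hl.mem_of_rel_of_cycleChain hc hzl hz)]
  have hdeg_w : G.degree w + 1 + l.length ≤ Fintype.card α := by
    rw [← card_neighborFinset_eq_degree, ← List.toFinset_card_of_nodup hl.nodup,
      ← card_insert_of_notMem (G.notMem_neighborFinset_self w), ← card_union_of_disjoint hdisj]
    exact card_le_univ _
  have := hdeg a
  have := hdeg w
  omega

theorem exists_cycleChain_of_card_le_two_mul_degree
    (hdeg : ∀ a, Fintype.card α ≤ 2 * G.degree a) :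
    ∃ l : List α, l.Nodup ∧ (∀ a, a ∈ l) ∧ Cycle.Chain G.Adj (l : Cycle α) := by
  have := G.symm
  obtain ⟨l, hl⟩ := exists_isLongestPath G.Adj
  rcases eq_or_ne l [] with rfl | hne
  · refine ⟨[], List.nodup_nil, fun a => ?_, Cycle.Chain.nil _⟩
    simpa using hl.length_le [a] (List.nodup_singleton a) (List.isChain_singleton a)
  obtain ⟨p, q, hp, hq, rfl, hqS, hpT⟩ := List.exists_append_eq_of_length_le_card_add_card hne
    (S := G.neighborFinset (l.head hne)) (T := G.neighborFinset (l.getLast hne))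
    (fun w hw => hl.mem_of_rel_head hne (G.adj_symm ((G.mem_neighborFinset _ _).1 hw)))
    (fun w hw => by
      simpa using hl.reverse.mem_of_rel_head (by simpa using hne)
        (by rw [List.head_reverse]; exact G.adj_symm ((G.mem_neighborFinset _ _).1 hw)))
    (by simp) (by simp)
    (by
      have := hdeg (l.head hne)
      have := hdeg (l.getLast hne)
      have := hl.nodup.length_le_card
      simp only [card_neighborFinset_eq_degree]
      omega)
  rw [mem_neighborFinset, List.head_append_of_ne_nil hp] at hqS
  rw [mem_neighborFinset, List.getLast_append_of_ne_nil hne hq] at hpT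
  have hc := hl.isChain.cycleChain_append_reverse hp hq hqS (G.adj_symm hpT)
  have hperm : (p ++ q.reverse).Perm (p ++ q) := (List.reverse_perm q).append_left p
  have hl' := hl.of_length_eq (hperm.nodup_iff.2 hl.nodup) hc.isChain hperm.length_eq
  exact ⟨_, hl'.nodup, mem_of_isLongestPath_of_cycleChain hdeg hl' hc, hc⟩

end SimpleGraph

section ThreeGraph

variable {V : Type*} [DecidableEq V] {E : Finset (Finset V)}

theorem ne_of_insert_mem_of_card_eq_three (hE : ∀ e ∈ E, #e = 3) {a b c : V}
    (h : {a, b, c} ∈ E) : a ≠ b ∧ a ≠ c ∧ b ≠ c := by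
  have h3 := hE _ h
  refine ⟨?_, ?_, ?_⟩ <;> rintro rfl <;> simp only [mem_insert, mem_singleton, true_or, or_true,
    insert_eq_of_mem] at h3 <;> exact (card_le_two.trans_lt (by norm_num)).ne h3

theorem exists_eq_insert_insert_of_card_eq_three {e : Finset V} (he : #e = 3) {p q : V}
    (hp : p ∈ e) (hq : q ∈ e) (hpq : p ≠ q) : ∃ z, e = {p, q, z} := by
  have hsub : {p, q} ⊆ e := by simp [insert_subset_iff, hp, hq]
  obtain ⟨z, hz⟩ : ∃ z, e \ {p, q} = {z} :=
    card_eq_one.1 (by rw [card_sdiff_of_subset hsub, he, card_pair hpq])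
  refine ⟨z, ?_⟩
  rw [← union_sdiff_of_subset hsub, hz]
  ext; simp

variable [Fintype V]

theorem card_filter_mem_mem_le_card_link (hE : ∀ e ∈ E, #e = 3) {p q : V} (hpq : p ≠ q) :
    #(E.filter fun e => p ∈ e ∧ q ∈ e) ≤ #(univ.filter fun z => ({p, q, z} : Finset V) ∈ E) := by
  refine card_le_card_of_surjOn (fun z => ({p, q, z} : Finset V)) fun e he => ?_
  simp only [coe_filter, Set.mem_ofPred_eq] at he
  obtain ⟨z, rfl⟩ := exists_eq_insert_insert_of_card_eq_three (hE e he.1) he.2.1 he.2.2 hpq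
  exact ⟨z, by simpa using he.1, rfl⟩

def commonLink (E : Finset (Finset V)) (x y : V) : SimpleGraph {z : V // z ≠ x ∧ z ≠ y} where
  Adj u w := u ≠ w ∧ ({x, u.1, w.1} : Finset V) ∈ E ∧ ({y, u.1, w.1} : Finset V) ∈ E
  symm := ⟨fun _ _ h => ⟨h.1.symm, by rw [pair_comm]; exact h.2.1, by rw [pair_comm]; exact h.2.2⟩⟩
  loopless := ⟨fun _ h => h.1 rfl⟩

theorem card_le_two_mul_degree_commonLink (hE : ∀ e ∈ E, #e = 3)
    (hcodeg : ∀ p q : V, p ≠ q → 3 * Fintype.card V ≤ 4 * #(E.filter fun e => p ∈ e ∧ q ∈ e))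
    {x y : V} [DecidableRel (commonLink E x y).Adj] (u : {z : V // z ≠ x ∧ z ≠ y}) :
    Fintype.card V ≤ 2 * (commonLink E x y).degree u := by
  set Sx := univ.filter fun z => ({x, u.1, z} : Finset V) ∈ E
  set Sy := univ.filter fun z => ({y, u.1, z} : Finset V) ∈ E
  have hx : 3 * Fintype.card V ≤ 4 * #Sx :=
    (hcodeg x u u.2.1.symm).trans (by gcongr; exact card_filter_mem_mem_le_card_link hE u.2.1.symm)
  have hy : 3 * Fintype.card V ≤ 4 * #Sy :=
    (hcodeg y u u.2.2.symm).trans (by gcongr; exact card_filter_mem_mem_le_card_link hE u.2.2.symm)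
  have hxy : #(Sx ∩ Sy) ≤ (commonLink E x y).degree u := by
    rw [← SimpleGraph.card_neighborFinset_eq_degree]
    refine card_le_card_of_surjOn Subtype.val fun z hz => ?_
    simp only [Sx, Sy, coe_inter, coe_filter, mem_univ, true_and, Set.mem_inter_iff,
      Set.mem_ofPred_eq] at hz
    obtain ⟨-, hxz, huz⟩ := ne_of_insert_mem_of_card_eq_three hE hz.1
    obtain ⟨-, hyz, -⟩ := ne_of_insert_mem_of_card_eq_three hE hz.2
    refine ⟨⟨z, hxz.symm, hyz.symm⟩, ?_, rfl⟩
    rw [mem_coe, SimpleGraph.mem_neighborFinset]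
    exact ⟨fun h => huz (congrArg Subtype.val h), hz⟩
  have := card_union_add_card_inter Sx Sy
  have := card_le_univ (Sx ∪ Sy)
  omega

end ThreeGraph

/-- for every `μ > 0` there is `n₀` such that every 3-graph on `n ≥ n₀`
vertices with minimum codegree at least `(3/4 + μ)n` contains a spanning double pyramid:
two distinct apexes `x, y` and a cyclic ordering `v : ZMod (n-2) → V` of the remaining
vertices such that `{x, vᵢ, vᵢ₊₁}` and `{y, vᵢ, vᵢ₊₁}` are edges for all `i` (mod `n-2`). -/
theorem statement5 (μ : ℝ) (hμ : 0 < μ) :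
    ∃ n₀ : ℕ, ∀ n : ℕ, n₀ ≤ n →
      ∀ (V : Type) [Fintype V] [DecidableEq V], Fintype.card V = n →
        ∀ E : Finset (Finset V), (∀ e ∈ E, e.card = 3) →
          (∀ x y : V, x ≠ y →
            (3 / 4 + μ) * n ≤ ((E.filter fun e => x ∈ e ∧ y ∈ e).card : ℝ)) →
          ∃ x y : V, x ≠ y ∧ ∃ v : ZMod (n - 2) → V,
            Function.Injective v ∧
            (∀ i, v i ≠ x ∧ v i ≠ y) ∧
            (∀ z : V, z ≠ x → z ≠ y → ∃ i, v i = z) ∧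
            (∀ i, ({x, v i, v (i + 1)} : Finset V) ∈ E ∧
                  ({y, v i, v (i + 1)} : Finset V) ∈ E) := by
  classical
  refine ⟨3, fun n hn V _ _ hV E hE hcodeg => ?_⟩
  obtain ⟨x, y, hxy⟩ := Fintype.exists_pair_of_one_lt_card (α := V) (by omega)
  have hcodeg' (p q : V) (hpq : p ≠ q) :
      3 * Fintype.card V ≤ 4 * #(E.filter fun e => p ∈ e ∧ q ∈ e) := by
    have := hcodeg p q hpq
    have : (3 * n : ℝ) ≤ 4 * #(E.filter fun e => p ∈ e ∧ q ∈ e) := by nlinarith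
    exact_mod_cast hV ▸ this
  obtain ⟨l, hnd, hmem, hc⟩ := (commonLink E x y).exists_cycleChain_of_card_le_two_mul_degree
    fun u => (Fintype.card_subtype_le _).trans (card_le_two_mul_degree_commonLink hE hcodeg' u)
  have hlen : l.length = n - 2 := by
    rw [← Fintype.card_fin l.length, Fintype.card_congr (hnd.getEquivOfForallMemList l hmem),
      Fintype.card_subtype, ← hV, ← card_pair hxy, ← card_compl]
    congr 1; ext; simp
  have hcycle := hnd.exists_bijective_zmod_of_cycleChain hmem
    (List.ne_nil_of_length_pos (by omega)) hc
  rw [hlen] at hcycle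
  obtain ⟨v, hv, hadj⟩ := hcycle
  exact ⟨x, y, hxy, fun i => v i, Subtype.val_injective.comp hv.1, fun i => (v i).2,
    fun z hzx hzy => (hv.2 ⟨z, hzx, hzy⟩).imp fun _ h => congrArg Subtype.val h,
    fun i => (hadj i).2⟩
end

section
/- For every δ > 0 and every integer k ≥ 2 there exists n₀ such that the following holds for all n ≥ n₀. If H is a 3-graph on n vertices and T ⊆ V(H) is a set of vertices such that at least δn³ edges of H contain a vertex of T, then H contains a double pyramid on 2k+2 vertices with both apexes in T: there are distinct vertices x, y ∈ T and distinct vertices v₁, …, v_{2k} ∈ V(H) \ {x,y} such that {x, v_i, v_{i+1}} and {y, v_i, v_{i+1}} are edges of H for every i (indices modulo 2k). -/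
/-!
For a pair `p` of vertices let `d p` be the number of `t ∈ T` with `p ∪ {t} ∈ E`. These codegrees
sum to at least `δ n³`, so by Cauchy–Schwarz `∑ d p ^ 2`, which counts pairs `(x, y) ∈ T × T`
together with a common link edge, is of order `δ² n⁴`; hence some distinct `x, y ∈ T` have
`δ² n² / 2` common link edges. By the Kővári–Sós–Turán double count, this common link graph contains
`K_{k,k}` once `n` is large, and a Hamiltonian cycle of `K_{k,k}` is the base of the double pyramid.
-/

open Finset Filter

theorem Finset.ne_of_card_insert_insert_eq_three {V : Type*} [DecidableEq V] {x a b : V}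
    (h : #({x, a, b} : Finset V) = 3) : a ≠ x := by
  rintro rfl
  rw [insert_eq_of_mem (mem_insert_self a {b})] at h
  exact absurd (card_le_two.trans_lt' h.ge) (by omega)

theorem Finset.descFactorial_card_le_card_filter_embedding {V : Type*} [Fintype V] [DecidableEq V]
    (k : ℕ) (s : Finset V) :
    (#s).descFactorial k ≤ #{u : Fin k ↪ V | ∀ i, u i ∈ s} := by
  have hcard : (#s).descFactorial k = #(univ : Finset (Fin k ↪ s)) := by
    simp [Fintype.card_embedding_eq]
  rw [hcard]
  refine card_le_card_of_injOn (fun u => u.trans (Function.Embedding.subtype _)) ?_ ?_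
  · intro u _
    simp
  · intro u _ u' _ h
    ext i
    simpa using DFunLike.congr_fun h i

theorem Finset.sum_card_filter_mem {ι α : Type*} [Fintype α] [DecidableEq α] (F : ι → Finset α)
    (T : Finset ι) :
    ∑ a, #{t ∈ T | a ∈ F t} = ∑ t ∈ T, #(F t) := by
  simp only [card_filter, card_eq_sum_ones (F _)]
  rw [sum_comm]
  simp

theorem Finset.exists_ne_lt_card_inter {ι α : Type*} [DecidableEq ι] [Fintype α] [DecidableEq α]
    (F : ι → Finset α) (T : Finset ι) {m : ℝ} (hm : 0 ≤ m)
    (h : Fintype.card α * (∑ t ∈ T, #(F t) + #T ^ 2 * m) < ((∑ t ∈ T, #(F t) : ℕ) : ℝ) ^ 2) :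
    ∃ x ∈ T, ∃ y ∈ T, x ≠ y ∧ m < #(F x ∩ F y) := by
  -- Cauchy–Schwarz on the degrees `d a = #{t ∈ T | a ∈ F t}`, whose squares count pairs in `T ×ˢ T`
  have hcs := sq_sum_le_card_mul_sum_sq (s := univ) (f := fun a => #{t ∈ T | a ∈ F t})
  have hsq : ∑ a, #{t ∈ T | a ∈ F t} ^ 2 =
      ∑ t ∈ T, #(F t) + ∑ p ∈ T.offDiag, #(F p.1 ∩ F p.2) := by
    have hpair (a : α) : #{t ∈ T | a ∈ F t} ^ 2 = #{p ∈ T ×ˢ T | a ∈ F p.1 ∩ F p.2} := by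
      simp only [sq, ← card_product, mem_inter, ← filter_product]
    simp_rw [hpair]
    rw [sum_card_filter_mem (fun p : ι × ι => F p.1 ∩ F p.2), ← diag_union_offDiag,
      sum_union (disjoint_diag_offDiag _), sum_diag]
    simp only [inter_self]
  rw [card_univ, sum_card_filter_mem, hsq] at hcs
  by_contra! hsmall
  have hoff : (∑ p ∈ T.offDiag, #(F p.1 ∩ F p.2) : ℝ) ≤ #T ^ 2 * m := by
    calc (∑ p ∈ T.offDiag, #(F p.1 ∩ F p.2) : ℝ) ≤ ∑ p ∈ T.offDiag, m := by
          gcongr with p hp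
          obtain ⟨hx, hy, hxy⟩ := mem_offDiag.1 hp
          exact hsmall _ hx _ hy hxy
      _ ≤ #T ^ 2 * m := by
          rw [sum_const, nsmul_eq_mul, offDiag_card]
          gcongr
          exact_mod_cast (Nat.sub_le _ _).trans (sq _).ge
  have : ((∑ t ∈ T, #(F t) : ℕ) : ℝ) ^ 2 ≤ Fintype.card α * (∑ t ∈ T, #(F t) + #T ^ 2 * m) := by
    calc _ ≤ (Fintype.card α : ℝ) * (∑ t ∈ T, #(F t) + ∑ p ∈ T.offDiag, #(F p.1 ∩ F p.2) : ℕ) := by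
          exact_mod_cast hcs
      _ ≤ _ := by push_cast; gcongr
  linarith

namespace SimpleGraph

theorem exists_cycle_of_completeBipartite {V : Type*} (G : SimpleGraph V) {k : ℕ} (hk : 0 < k)
    (a b : Fin k ↪ V) (hab : ∀ i j, G.Adj (a i) (b j)) :
    ∃ v : ZMod (2 * k) → V, Function.Injective v ∧ ∀ i, G.Adj (v i) (v (i + 1)) := by
  have : NeZero (2 * k) := ⟨by omega⟩
  have : Fact (1 < 2 * k) := ⟨by omega⟩
  let w : ℕ → V := fun m =>
    if m % 2 = 0 then a ⟨m / 2 % k, Nat.mod_lt _ hk⟩ else b ⟨m / 2 % k, Nat.mod_lt _ hk⟩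
  have hw_adj (m : ℕ) : G.Adj (w m) (w (m + 1)) := by
    rcases Nat.mod_two_eq_zero_or_one m with hm | hm
    · have h1 : (m + 1) % 2 ≠ 0 := by omega
      have h2 : (m + 1) / 2 = m / 2 := by omega
      simp only [w, hm, h1, h2, if_true, if_false]
      exact hab _ _
    · have h1 : (m + 1) % 2 = 0 := by omega
      have h2 : m % 2 ≠ 0 := by omega
      simp only [w, h1, h2, if_true, if_false]
      exact (hab _ _).symm
  have hw_mod (m : ℕ) : w (m % (2 * k)) = w m := by
    simp only [w, Nat.mod_mul_right_div_self, Nat.mod_mod, Nat.mod_mod_of_dvd m (dvd_mul_right 2 k)]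
  refine ⟨fun i => w i.val, fun i j hij => ZMod.val_injective _ ?_, fun i => ?_⟩
  · have hi := ZMod.val_lt i
    have hj := ZMod.val_lt j
    have hi2 : i.val / 2 % k = i.val / 2 := Nat.mod_eq_of_lt (by omega)
    have hj2 : j.val / 2 % k = j.val / 2 := Nat.mod_eq_of_lt (by omega)
    simp only [w] at hij
    split_ifs at hij
    · have := congrArg Fin.val (a.injective hij)
      simp only [hi2, hj2] at this
      omega
    · exact absurd hij (hab _ _).ne
    · exact absurd hij.symm (hab _ _).ne
    · have := congrArg Fin.val (b.injective hij)
      simp only [hi2, hj2] at this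
      omega
  · simp only [ZMod.val_add, ZMod.val_one, hw_mod]
    exact hw_adj _

variable {V : Type*} [Fintype V] [DecidableEq V] (G : SimpleGraph V) [DecidableRel G.Adj]

theorem exists_completeBipartite_of_sum_pow_degree {k : ℕ}
    (h : k * Fintype.card V ^ k < ∑ v, (G.degree v - k) ^ k) :
    ∃ a b : Fin k ↪ V, ∀ i j, G.Adj (a i) (b j) := by
  -- double count pairs `(v, u)` with `u` a `k`-tuple of distinct neighbours of `v`
  have hcount : ∑ v, (G.degree v - k) ^ k ≤ ∑ u : Fin k ↪ V, #{v | ∀ i, G.Adj (u i) v} := by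
    calc ∑ v, (G.degree v - k) ^ k
        ≤ ∑ v, #{u : Fin k ↪ V | ∀ i, u i ∈ G.neighborFinset v} := by
          gcongr with v
          calc (G.degree v - k) ^ k ≤ (G.degree v + 1 - k) ^ k := by gcongr; omega
            _ ≤ (G.degree v).descFactorial k := Nat.pow_sub_le_descFactorial _ _
            _ ≤ _ := descFactorial_card_le_card_filter_embedding k _
      _ = ∑ u : Fin k ↪ V, #{v | ∀ i, G.Adj (u i) v} := by
          simp only [card_filter, mem_neighborFinset, G.adj_comm]
          exact sum_comm
  have hfew : ∑ _u : Fin k ↪ V, k ≤ k * Fintype.card V ^ k := by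
    rw [sum_const, card_univ, Fintype.card_embedding_eq, Fintype.card_fin, smul_eq_mul, mul_comm]
    gcongr
    exact Nat.descFactorial_le_pow _ _
  obtain ⟨a, -, ha⟩ := exists_lt_of_sum_lt (hfew.trans_lt (h.trans_le hcount))
  obtain ⟨b⟩ := Function.Embedding.nonempty_of_card_le
    (α := Fin k) (β := {v // ∀ i, G.Adj (a i) v}) (by simpa [Fintype.card_subtype] using ha.le)
  exact ⟨a, b.trans (Function.Embedding.subtype _), fun i j => (b j).2 i⟩

theorem eventually_exists_completeBipartite {ε : ℝ} (hε : 0 < ε) (k : ℕ) :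
    ∀ᶠ n : ℕ in atTop, ∀ {V : Type*} [Fintype V] [DecidableEq V] (G : SimpleGraph V)
      [DecidableRel G.Adj] [Fintype G.edgeSet], Fintype.card V = n → ε * n ^ 2 ≤ #G.edgeFinset →
      ∃ a b : Fin k ↪ V, ∀ i j, G.Adj (a i) (b j) := by
  filter_upwards [tendsto_natCast_atTop_atTop.eventually_ge_atTop (k / ε),
    tendsto_natCast_atTop_atTop.eventually_gt_atTop (k / ε ^ k)] with n hkn hkkn
  intro V _ _ G _ _ hV hG
  refine G.exists_completeBipartite_of_sum_pow_degree (hV ▸ ?_)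
  have hn : (0 : ℝ) < n := lt_of_le_of_lt (by positivity) hkkn
  have hεn : k ≤ ε * n := by rwa [div_le_iff₀' hε] at hkn
  have hεkn : k < ε ^ k * n := by rwa [div_lt_iff₀' (by positivity)] at hkkn
  set s := ∑ v, (G.degree v - k)
  have hdeg : ∑ v, G.degree v ≤ s + n * k := by
    calc ∑ v, G.degree v ≤ ∑ v, (G.degree v - k + k) := by gcongr; omega
      _ = s + n * k := by rw [sum_add_distrib, sum_const, card_univ, hV, smul_eq_mul]
  have hsum : ε * n ^ 2 ≤ s := by
    have hedges : ∑ v, G.degree v = 2 * #G.edgeFinset := by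
      convert G.sum_degrees_eq_twice_card_edges
    have : (2 * #G.edgeFinset : ℝ) ≤ s + n * k := by exact_mod_cast hedges ▸ hdeg
    nlinarith
  rcases k with _ | j
  · simpa [hV] using hn
  set d : V → ℝ := fun v => ((G.degree v - (j + 1) : ℕ) : ℝ)
  have hpow_mean :=
    pow_sum_le_card_mul_sum_pow (s := univ) (f := d) (fun _ _ => Nat.cast_nonneg _) j
  rw [card_univ, hV] at hpow_mean
  have hs : (s : ℝ) = ∑ v, d v := by simp [s, d]
  have key : ((j + 1 : ℕ) : ℝ) * n ^ (j + 1) * n ^ j < (∑ v, d v ^ (j + 1)) * n ^ j := by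
    calc ((j + 1 : ℕ) : ℝ) * n ^ (j + 1) * n ^ j < ε ^ (j + 1) * n * n ^ (j + 1) * n ^ j := by
          gcongr
      _ = (ε * n ^ 2) ^ (j + 1) := by ring
      _ ≤ (s : ℝ) ^ (j + 1) := by gcongr
      _ ≤ _ := by rw [hs, mul_comm]; exact_mod_cast hpow_mean
  have hlt := lt_of_mul_lt_mul_right key (by positivity)
  simp only [d] at hlt
  exact_mod_cast hlt

end SimpleGraph

section Hypergraph

variable {V : Type*} [DecidableEq V]

def linkGraph (E : Finset (Finset V)) (x : V) : SimpleGraph V where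
  Adj a b := a ≠ b ∧ {x, a, b} ∈ E
  symm := ⟨fun a b h => ⟨h.1.symm, pair_comm a b ▸ h.2⟩⟩
  loopless := ⟨fun _ h => h.1 rfl⟩

instance (E : Finset (Finset V)) (x : V) : DecidableRel (linkGraph E x).Adj :=
  fun _ _ => inferInstanceAs (Decidable (_ ≠ _ ∧ _ ∈ E))

theorem card_filter_mem_le_card_edgeFinset_linkGraph [Fintype V] {E : Finset (Finset V)}
    (hE : ∀ e ∈ E, #e = 3) (t : V) : #{e ∈ E | t ∈ e} ≤ #(linkGraph E t).edgeFinset := by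
  refine card_le_card_of_surjOn
    (Sym2.lift ⟨fun a b => {t, a, b}, fun a b => by simp only [pair_comm]⟩) ?_
  intro e he
  obtain ⟨heE, hte⟩ := mem_filter.1 he
  obtain ⟨a, b, hab, hpair⟩ := card_eq_two.1 (show #(e.erase t) = 2 by
    rw [card_erase_of_mem hte, hE e heE])
  have he_eq : ({t, a, b} : Finset V) = e := by rw [← hpair, insert_erase hte]
  refine ⟨s(a, b), ?_, he_eq⟩
  rw [mem_coe, SimpleGraph.mem_edgeFinset, SimpleGraph.mem_edgeSet]
  exact ⟨hab, he_eq ▸ heE⟩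

theorem card_filter_exists_mem_le_sum [Fintype V] {E : Finset (Finset V)} (hE : ∀ e ∈ E, #e = 3)
    (T : Finset V) :
    #{e ∈ E | ∃ t ∈ T, t ∈ e} ≤ ∑ t ∈ T, #(linkGraph E t).edgeFinset := by
  calc #{e ∈ E | ∃ t ∈ T, t ∈ e} ≤ #(T.biUnion fun t => {e ∈ E | t ∈ e}) := by
        gcongr
        intro e he
        obtain ⟨heE, t, ht, hte⟩ := mem_filter.1 he
        exact mem_biUnion.2 ⟨t, ht, mem_filter.2 ⟨heE, hte⟩⟩
    _ ≤ ∑ t ∈ T, #{e ∈ E | t ∈ e} := card_biUnion_le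
    _ ≤ ∑ t ∈ T, #(linkGraph E t).edgeFinset := by
        gcongr with t
        exact card_filter_mem_le_card_edgeFinset_linkGraph hE t

theorem eventually_exists_dense_commonLink {δ : ℝ} (hδ : 0 < δ) :
    ∀ᶠ n : ℕ in atTop, ∀ (V : Type*) [Fintype V] [DecidableEq V], Fintype.card V = n →
      ∀ E : Finset (Finset V), (∀ e ∈ E, #e = 3) → ∀ T : Finset V,
        δ * n ^ 3 ≤ (#{e ∈ E | ∃ t ∈ T, t ∈ e} : ℝ) →
        ∃ x ∈ T, ∃ y ∈ T, x ≠ y ∧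
          δ ^ 2 / 2 * n ^ 2 ≤ #(linkGraph E x ⊓ linkGraph E y).edgeFinset := by
  filter_upwards [tendsto_natCast_atTop_atTop.eventually_gt_atTop (2 / δ)] with n hn
  intro V _ _ hV E hE T hT
  have hδn : 2 < δ * n := by rwa [div_lt_iff₀' hδ] at hn
  have hn0 : (0 : ℝ) < n := by nlinarith
  set S := ∑ t ∈ T, #(linkGraph E t).edgeFinset
  have hS : δ * n ^ 3 ≤ S := hT.trans (by exact_mod_cast card_filter_exists_mem_le_sum hE T)
  have hSym2 : (Fintype.card (Sym2 V) : ℝ) ≤ n ^ 2 := by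
    have : (n + 1).choose 2 ≤ n ^ 2 := by
      rw [Nat.choose_two_right, Nat.add_sub_cancel]
      exact Nat.div_le_of_le_mul (by nlinarith)
    rw [Sym2.card, hV]
    exact_mod_cast this
  have hT : (#T : ℝ) ≤ n := by exact_mod_cast hV ▸ card_le_univ T
  obtain ⟨x, hx, y, hy, hxy, hlt⟩ := exists_ne_lt_card_inter (fun t => (linkGraph E t).edgeFinset) T
    (m := δ ^ 2 / 2 * n ^ 2) (by positivity) (by
      calc (Fintype.card (Sym2 V) : ℝ) * ((S : ℝ) + #T ^ 2 * (δ ^ 2 / 2 * n ^ 2))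
          ≤ n ^ 2 * (S + n ^ 2 * (δ ^ 2 / 2 * n ^ 2)) := by gcongr
        _ = n ^ 2 * S + δ * n ^ 3 * (δ * n ^ 3) / 2 := by ring
        _ ≤ n ^ 2 * S + δ * n ^ 3 * S / 2 := by gcongr
        _ < δ * n ^ 3 * S := by
            have hSpos : (0 : ℝ) < S := lt_of_lt_of_le (by positivity) hS
            nlinarith [mul_pos (mul_pos (pow_pos hn0 2) hSpos) (sub_pos.2 hδn)]
        _ ≤ (S : ℝ) ^ 2 := by rw [sq]; gcongr)
  exact ⟨x, hx, y, hy, hxy, by rw [SimpleGraph.edgeFinset_inf]; exact hlt.le⟩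

end Hypergraph

/-- for every `δ > 0` and integer `k ≥ 2` there is `n₀` such that for all
`n ≥ n₀`, if `H` is a 3-graph on `n` vertices and `T` a set of vertices meeting at least
`δ n³` edges, then `H` contains a double pyramid on `2k+2` vertices with both apexes in `T`. -/
theorem statement6 (δ : ℝ) (hδ : 0 < δ) (k : ℕ) (hk : 2 ≤ k) :
    ∃ n₀ : ℕ, ∀ n : ℕ, n₀ ≤ n →
      ∀ (V : Type) [Fintype V] [DecidableEq V], Fintype.card V = n →
        ∀ E : Finset (Finset V), (∀ e ∈ E, e.card = 3) →
          ∀ T : Finset V,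
            δ * n ^ 3 ≤ ((E.filter fun e => ∃ t ∈ T, t ∈ e).card : ℝ) →
            ∃ x ∈ T, ∃ y ∈ T, x ≠ y ∧ ∃ v : ZMod (2 * k) → V,
              Function.Injective v ∧ (∀ i, v i ≠ x ∧ v i ≠ y) ∧
              ∀ i, ({x, v i, v (i + 1)} : Finset V) ∈ E ∧
                   ({y, v i, v (i + 1)} : Finset V) ∈ E := by
  obtain ⟨n₀, hn₀⟩ := eventually_atTop.1 ((eventually_exists_dense_commonLink hδ).and
    (SimpleGraph.eventually_exists_completeBipartite (ε := δ ^ 2 / 2) (by positivity) k))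
  refine ⟨n₀, fun n hn V _ _ hV E hE T hT => ?_⟩
  obtain ⟨hlink, hbip⟩ := hn₀ n hn
  obtain ⟨x, hx, y, hy, hxy, hdense⟩ := hlink V hV E hE T hT
  obtain ⟨a, b, hab⟩ := hbip (linkGraph E x ⊓ linkGraph E y) hV hdense
  obtain ⟨v, hv, hadj⟩ :=
    (linkGraph E x ⊓ linkGraph E y).exists_cycle_of_completeBipartite (by omega) a b hab
  refine ⟨x, hx, y, hy, hxy, v, hv, fun i => ⟨?_, ?_⟩, fun i => ⟨(hadj i).1.2, (hadj i).2.2⟩⟩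
  · exact ne_of_card_insert_insert_eq_three (hE _ (hadj i).1.2)
  · exact ne_of_card_insert_insert_eq_three (hE _ (hadj i).2.2)
end

section
/- There exists μ₀ > 0 such that for every μ ∈ (0, μ₀) there exists ε₀ > 0 such that for every ε ∈ (0, ε₀) there exists n₀ such that the following holds for all n ≥ n₀. If H is an (ε,μ)-coloured 3-graph on n vertices, then for all but at most μ⁴n vertices v of H, the green link graph GL(v) has at least (1/3 + μ/2)n vertices whose degree in GL(v) is at least (1/3 + μ/2)n. -/
open scoped Classical
open Finset

variable {V : Type} [Fintype V] [DecidableEq V]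


lemma aux_card3 (v x y : V) (hvx : v ≠ x) (hyv : y ≠ v) (hyx : y ≠ x) :
    ({v, x, y} : Finset V).card = 3 := by
  rw [Finset.card_insert_of_notMem (by simp [hvx, hyv.symm]),
    Finset.card_insert_of_notMem (by simp [hyx.symm]), Finset.card_singleton]

/-- incidence count -/
lemma aux_sum_card_filter (F : Finset (Finset V)) :
    ∑ v : V, (F.filter (fun e => v ∈ e)).card = ∑ e ∈ F, e.card := by
  simp only [Finset.card_filter]
  rw [Finset.sum_comm]
  apply Finset.sum_congr rfl
  intro e _
  rw [← Finset.card_filter]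
  congr 1
  exact Finset.filter_univ_mem e

/-- Markov-type bound over the reals. -/
lemma aux_markov {α : Type*} (s : Finset α) (f : α → ℕ) (t : ℝ) :
    ((s.filter (fun x => t < (f x : ℝ))).card : ℝ) * t ≤ ∑ x ∈ s, (f x : ℝ) := by
  calc ((s.filter (fun x => t < (f x : ℝ))).card : ℝ) * t
      = ∑ _x ∈ s.filter (fun x => t < (f x : ℝ)), t := by
        rw [Finset.sum_const, nsmul_eq_mul]
    _ ≤ ∑ x ∈ s.filter (fun x => t < (f x : ℝ)), (f x : ℝ) := by
        apply Finset.sum_le_sum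
        intro i hi
        exact le_of_lt (Finset.mem_filter.mp hi).2
    _ ≤ ∑ x ∈ s, (f x : ℝ) := by
        apply Finset.sum_le_sum_of_subset_of_nonneg (Finset.filter_subset _ _)
        intro i _ _; positivity

/-- third vertex bijection -/
lemma aux_third (G : Finset (Finset V)) (hG : ∀ e ∈ G, e.card = 3) (v x : V) (hvx : v ≠ x) :
    (Finset.univ.filter (fun y => ({v, x, y} : Finset V) ∈ G)).card
      = (G.filter (fun e => v ∈ e ∧ x ∈ e)).card := by
  apply Finset.card_bij (fun y _ => ({v, x, y} : Finset V))
  · intro y hy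
    simp only [Finset.mem_filter, Finset.mem_univ, true_and] at hy ⊢
    refine ⟨hy, by simp, by simp⟩
  · intro y1 h1 y2 h2 heq
    simp only [Finset.mem_filter, Finset.mem_univ, true_and] at h1 h2
    have hc1 := hG _ h1
    have hy1 : y1 ≠ v ∧ y1 ≠ x := by
      by_contra h
      push_neg at h
      have hsub : ({v, x, y1} : Finset V) ⊆ {v, x} := by
        intro a ha
        simp only [Finset.mem_insert, Finset.mem_singleton] at ha ⊢
        rcases ha with rfl|rfl|rfl
        · exact Or.inl rfl
        · exact Or.inr rfl
        · rcases Classical.em (a = v) with h'|h'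
          · exact Or.inl h'
          · exact Or.inr (h h')
      have := Finset.card_le_card hsub
      have h2' : ({v, x} : Finset V).card = 2 := Finset.card_pair hvx
      omega
    have : y1 ∈ ({v, x, y2} : Finset V) := by rw [← heq]; simp
    simp only [Finset.mem_insert, Finset.mem_singleton] at this
    rcases this with h|h|h
    · exact absurd h hy1.1
    · exact absurd h hy1.2
    · exact h
  · intro e he
    simp only [Finset.mem_filter] at he
    obtain ⟨heG, hv, hx⟩ := he
    have hcard := hG _ heG
    have hsub : ({v, x} : Finset V) ⊆ e := by
      intro a ha; simp only [Finset.mem_insert, Finset.mem_singleton] at ha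
      rcases ha with rfl|rfl <;> assumption
    have h2 : ({v, x} : Finset V).card = 2 := Finset.card_pair hvx
    have : (e \ {v, x}).card = 1 := by
      rw [Finset.card_sdiff_of_subset hsub, hcard, h2]
    obtain ⟨y, hy⟩ := Finset.card_eq_one.mp this
    have hymem : y ∈ e \ ({v, x} : Finset V) := by rw [hy]; simp
    rw [Finset.mem_sdiff, Finset.mem_insert, Finset.mem_singleton] at hymem
    push_neg at hymem
    obtain ⟨hye, hyv, hyx⟩ := hymem
    have hsub2 : ({v, x, y} : Finset V) ⊆ e := by
      intro a ha
      simp only [Finset.mem_insert, Finset.mem_singleton] at ha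
      rcases ha with rfl|rfl|rfl <;> assumption
    have h3 : ({v, x, y} : Finset V).card = 3 := aux_card3 v x y hvx hyv hyx
    have : ({v, x, y} : Finset V) = e :=
      Finset.eq_of_subset_of_card_le hsub2 (by omega)
    exact ⟨y, Finset.mem_filter.mpr ⟨Finset.mem_univ _, by rw [this]; exact heG⟩, this⟩

/-- decomposition -/
lemma aux_decomp (E Red Green : Finset (Finset V)) (hR : Red ⊆ E) (hG : Green ⊆ E)
    (hd : Disjoint Red Green) (P : Finset V → Prop) [DecidablePred P] :
    (E.filter P).card
      = (Red.filter P).card + (Green.filter P).card + ((E \ (Red ∪ Green)).filter P).card := by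
  have hsub : Red ∪ Green ⊆ E := Finset.union_subset hR hG
  have h1 : E = (Red ∪ Green) ∪ (E \ (Red ∪ Green)) := by
    rw [Finset.union_sdiff_of_subset hsub]
  have hd1 : Disjoint ((Red ∪ Green).filter P) ((E \ (Red ∪ Green)).filter P) :=
    Finset.disjoint_filter_filter Finset.disjoint_sdiff
  have hd2 : Disjoint (Red.filter P) (Green.filter P) :=
    Finset.disjoint_filter_filter hd
  conv_lhs => rw [h1]
  rw [Finset.filter_union, Finset.card_union_of_disjoint hd1, Finset.filter_union,
    Finset.card_union_of_disjoint hd2]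


lemma aux_touch (Red Green : Finset (Finset V))
    (hRc : ∀ e ∈ Red, e.card = 3) (hGc : ∀ e ∈ Green, e.card = 3)
    (hd : Disjoint Red Green)
    (s : Finset V) (Z : V → Finset V) (hZ : ∀ v ∈ s, ∀ z ∈ Z v, z ≠ v) :
    ∑ v ∈ s, ∑ z ∈ Z v,
        (Red.filter (fun e => v ∈ e ∧ z ∈ e)).card *
          (Green.filter (fun e => v ∈ e ∧ z ∈ e)).card
      ≤ 2 * ((Red ×ˢ Green).filter (fun p => (p.1 ∩ p.2).card = 2)).card := by
  set TS := (Red ×ˢ Green).filter (fun p => (p.1 ∩ p.2).card = 2) with hTS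
  -- Step A: product structure
  have stepA : ∀ v z : V, z ≠ v →
      (Red.filter (fun e => v ∈ e ∧ z ∈ e)).card *
        (Green.filter (fun e => v ∈ e ∧ z ∈ e)).card
      = (TS.filter (fun q => v ∈ q.1 ∧ z ∈ q.1 ∧ v ∈ q.2 ∧ z ∈ q.2)).card := by
    intro v z hzv
    rw [← Finset.card_product]
    congr 1
    ext q
    simp only [Finset.mem_filter, Finset.mem_product, hTS]
    constructor
    swap
    · intro h; tauto
    · intro h
      have hr : q.1 ∈ Red := by tauto
      have hg : q.2 ∈ Green := by tauto
      have h1 : v ∈ q.1 := by tauto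
      have h2 : z ∈ q.1 := by tauto
      have h3 : v ∈ q.2 := by tauto
      have h4 : z ∈ q.2 := by tauto
      have hcard : (q.1 ∩ q.2).card = 2 := ?_
      · tauto
      -- intersection has card 2
      have hsub : ({v, z} : Finset V) ⊆ q.1 ∩ q.2 := by
        intro a ha
        simp only [Finset.mem_insert, Finset.mem_singleton] at ha
        rcases ha with rfl|rfl <;> simp [Finset.mem_inter, *]
      have hlow : 2 ≤ (q.1 ∩ q.2).card := by
        have := Finset.card_le_card hsub
        rwa [Finset.card_pair (Ne.symm hzv)] at this
      have hup : (q.1 ∩ q.2).card ≤ 3 := by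
        have := Finset.card_le_card (Finset.inter_subset_left (s₁ := q.1) (s₂ := q.2))
        rw [hRc _ hr] at this
        exact this
      have hne : q.1 ≠ q.2 := by
        intro h
        exact (Finset.disjoint_left.mp hd hr) (h ▸ hg)
      have : (q.1 ∩ q.2).card ≠ 3 := by
        intro h3'
        have h1' : q.1 ∩ q.2 = q.1 :=
          Finset.eq_of_subset_of_card_le Finset.inter_subset_left
            (by rw [hRc _ hr, h3'])
        have h2' : q.1 ∩ q.2 = q.2 :=
          Finset.eq_of_subset_of_card_le Finset.inter_subset_right
            (by rw [hGc _ hg, h3'])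
        exact hne (h1'.symm.trans h2')
      omega
  -- rewrite LHS
  have hrw : ∑ v ∈ s, ∑ z ∈ Z v,
      (Red.filter (fun e => v ∈ e ∧ z ∈ e)).card *
        (Green.filter (fun e => v ∈ e ∧ z ∈ e)).card
      = ∑ q ∈ TS, ((s.sigma Z).filter
          (fun p => p.1 ∈ q.1 ∧ p.2 ∈ q.1 ∧ p.1 ∈ q.2 ∧ p.2 ∈ q.2)).card := by
    rw [Finset.sum_sigma']
    calc ∑ p ∈ s.sigma Z,
        (Red.filter (fun e => p.1 ∈ e ∧ p.2 ∈ e)).card *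
          (Green.filter (fun e => p.1 ∈ e ∧ p.2 ∈ e)).card
        = ∑ p ∈ s.sigma Z,
            (TS.filter (fun q => p.1 ∈ q.1 ∧ p.2 ∈ q.1 ∧ p.1 ∈ q.2 ∧ p.2 ∈ q.2)).card := by
          apply Finset.sum_congr rfl
          intro p hp
          rw [Finset.mem_sigma] at hp
          exact stepA p.1 p.2 (hZ _ hp.1 _ hp.2)
      _ = ∑ p ∈ s.sigma Z, ∑ q ∈ TS,
            (if p.1 ∈ q.1 ∧ p.2 ∈ q.1 ∧ p.1 ∈ q.2 ∧ p.2 ∈ q.2 then 1 else 0) := by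
          apply Finset.sum_congr rfl; intro p _; rw [Finset.card_filter]
      _ = ∑ q ∈ TS, ∑ p ∈ s.sigma Z,
            (if p.1 ∈ q.1 ∧ p.2 ∈ q.1 ∧ p.1 ∈ q.2 ∧ p.2 ∈ q.2 then 1 else 0) :=
          Finset.sum_comm
      _ = _ := by
          apply Finset.sum_congr rfl; intro q _; rw [Finset.card_filter]
  rw [hrw]
  -- each q contributes at most 2
  have hbound : ∀ q ∈ TS, ((s.sigma Z).filter
      (fun p => p.1 ∈ q.1 ∧ p.2 ∈ q.1 ∧ p.1 ∈ q.2 ∧ p.2 ∈ q.2)).card ≤ 2 := by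
    intro q hq
    have hq2 : (q.1 ∩ q.2).card = 2 := (Finset.mem_filter.mp hq).2
    obtain ⟨a, b, hab, hset⟩ := Finset.card_eq_two.mp hq2
    have hsub : ((s.sigma Z).filter
        (fun p => p.1 ∈ q.1 ∧ p.2 ∈ q.1 ∧ p.1 ∈ q.2 ∧ p.2 ∈ q.2))
        ⊆ ({⟨a, b⟩, ⟨b, a⟩} : Finset ((_ : V) × V)) := by
      intro p hp
      rw [Finset.mem_filter, Finset.mem_sigma] at hp
      obtain ⟨⟨hps, hpz⟩, h1, h2, h3, h4⟩ := hp
      have hne := hZ _ hps _ hpz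
      have hm1 : p.1 ∈ q.1 ∩ q.2 := Finset.mem_inter.mpr ⟨h1, h3⟩
      have hm2 : p.2 ∈ q.1 ∩ q.2 := Finset.mem_inter.mpr ⟨h2, h4⟩
      rw [hset, Finset.mem_insert, Finset.mem_singleton] at hm1 hm2
      simp only [Finset.mem_insert, Finset.mem_singleton]
      obtain ⟨x1, x2⟩ := p
      simp only at hm1 hm2 hne ⊢
      rcases hm1 with rfl|rfl
      · rcases hm2 with rfl|rfl
        · exact absurd rfl hne.symm
        · left; rfl
      · rcases hm2 with rfl|rfl
        · right; rfl
        · exact absurd rfl hne.symm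
    calc _ ≤ ({⟨a, b⟩, ⟨b, a⟩} : Finset ((_ : V) × V)).card := Finset.card_le_card hsub
      _ ≤ 2 := by
        apply le_trans (Finset.card_insert_le _ _)
        simp
  calc ∑ q ∈ TS, ((s.sigma Z).filter
      (fun p => p.1 ∈ q.1 ∧ p.2 ∈ q.1 ∧ p.1 ∈ q.2 ∧ p.2 ∈ q.2)).card
      ≤ ∑ _q ∈ TS, 2 := Finset.sum_le_sum hbound
    _ = 2 * TS.card := by rw [Finset.sum_const]; ring


set_option maxHeartbeats 4000000 in
/-- there is `μ₀ > 0` such that for every `μ ∈ (0, μ₀)` there is `ε₀ > 0`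
such that for every `ε ∈ (0, ε₀)` there is `n₀` such that for all `n ≥ n₀` the following
holds. If `H` is an `(ε,μ)`-coloured 3-graph on `n` vertices (minimum codegree at least
`(1/3+μ)n`; edges partially coloured by disjoint families `Red`, `Green` with at most `εn³`
uncoloured edges, at most `εn⁴` touching red-green pairs, and at least `μn/4` vertices in
fewer than `εn²` red edges), then for all but at most `μ⁴n` vertices `v`, the green link
graph `GL(v)` has at least `(1/3+μ/2)n` vertices of degree at least `(1/3+μ/2)n`. -/
theorem statement11 :
    ∃ μ₀ : ℝ, 0 < μ₀ ∧ ∀ μ : ℝ, 0 < μ → μ < μ₀ →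
      ∃ ε₀ : ℝ, 0 < ε₀ ∧ ∀ ε : ℝ, 0 < ε → ε < ε₀ →
        ∃ n₀ : ℕ, ∀ n : ℕ, n₀ ≤ n →
          ∀ (V : Type) [Fintype V] [DecidableEq V], Fintype.card V = n →
            ∀ E Red Green : Finset (Finset V), (∀ e ∈ E, e.card = 3) →
              Red ⊆ E → Green ⊆ E → Disjoint Red Green →
              (∀ x y : V, x ≠ y →
                (1 / 3 + μ) * n ≤ ((E.filter fun e => x ∈ e ∧ y ∈ e).card : ℝ)) →
              ((E \ (Red ∪ Green)).card : ℝ) ≤ ε * n ^ 3 →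
              (((Red ×ˢ Green).filter fun p => (p.1 ∩ p.2).card = 2).card : ℝ) ≤ ε * n ^ 4 →
              μ * n / 4 ≤ ((Finset.univ.filter fun v : V =>
                  ((Red.filter fun e => v ∈ e).card : ℝ) < ε * n ^ 2).card : ℝ) →
              ((Finset.univ.filter fun v : V =>
                  ¬ ((1 / 3 + μ / 2) * n ≤ ((Finset.univ.filter fun x : V =>
                      x ≠ v ∧ (1 / 3 + μ / 2) * n ≤
                        ((Finset.univ.filter fun y : V =>
                          ({v, x, y} : Finset V) ∈ Green).card : ℝ)).card : ℝ))).card : ℝ)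
                ≤ μ ^ 4 * n := by
  refine ⟨1/100, by norm_num, fun μ hμ0 hμ1 => ⟨μ^9/10^7, by positivity, fun ε hε0 hε1 =>
    ⟨Nat.ceil ((10:ℝ)^9/μ^9) + 1, fun n hn V _ _ hcardV E Red Green hE3 hRE hGE hdis
      hcodeg hunc htouch hspec => ?_⟩⟩⟩
  by_contra hcon
  push_neg at hcon
  -- basic numerics
  set N : ℝ := (n : ℝ) with hN
  have hN1 : (10:ℝ)^9 / μ^9 ≤ N := by
    have h1 : ((Nat.ceil ((10:ℝ)^9/μ^9) : ℕ) : ℝ) ≤ N := by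
      exact_mod_cast Nat.cast_le.mpr (le_trans (Nat.le_succ _) hn)
    exact le_trans (Nat.le_ceil _) h1
  have hNpos : 0 < N := lt_of_lt_of_le (by positivity) hN1
  have hμN : (10:ℝ)^9 ≤ μ^9 * N := by
    rw [div_le_iff₀ (pow_pos hμ0 9)] at hN1
    linarith
  have hμ4N : 1000 ≤ μ^4 * N := by nlinarith [pow_le_one₀ (le_of_lt hμ0) (by linarith : μ ≤ 1) (n := 5), sq_nonneg μ, pow_pos hμ0 9, pow_pos hμ0 4]
  have hμ1' : μ ≤ 1/100 := le_of_lt hμ1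
  have hε : ε ≤ μ^9/10^7 := le_of_lt hε1
  -- abbreviations
  set Unc := E \ (Red ∪ Green) with hUncDef
  have hU3 : ∀ e ∈ Unc, e.card = 3 := fun e he => hE3 e (Finset.mem_sdiff.mp he).1
  have hR3 : ∀ e ∈ Red, e.card = 3 := fun e he => hE3 e (hRE he)
  have hG3 : ∀ e ∈ Green, e.card = 3 := fun e he => hE3 e (hGE he)
  -- pair sums
  have hpair : ∀ (F : Finset (Finset V)), (∀ e ∈ F, e.card = 3) → ∀ v : V,
      ∑ x : V, (F.filter (fun e => v ∈ e ∧ x ∈ e)).card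
        = 3 * (F.filter (fun e => v ∈ e)).card := by
    intro F hF v
    calc ∑ x : V, (F.filter (fun e => v ∈ e ∧ x ∈ e)).card
        = ∑ x : V, ((F.filter (fun e => v ∈ e)).filter (fun e => x ∈ e)).card := by
          apply Finset.sum_congr rfl
          intro x _
          rw [Finset.filter_filter]
      _ = ∑ e ∈ F.filter (fun e => v ∈ e), e.card := aux_sum_card_filter _
      _ = ∑ _e ∈ F.filter (fun e => v ∈ e), 3 := by
          apply Finset.sum_congr rfl
          intro e he
          exact hF e (Finset.mem_filter.mp he).1
      _ = 3 * (F.filter (fun e => v ∈ e)).card := by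
          rw [Finset.sum_const, smul_eq_mul, mul_comm]
  -- uncovered incidences
  have hUCsum : ∑ v : V, ((Unc.filter (fun e => v ∈ e)).card : ℝ) ≤ 3 * ε * N^3 := by
    have h1 : ∑ v : V, (Unc.filter (fun e => v ∈ e)).card = 3 * Unc.card := by
      rw [aux_sum_card_filter]
      calc ∑ e ∈ Unc, e.card = ∑ _e ∈ Unc, 3 := Finset.sum_congr rfl hU3
        _ = 3 * Unc.card := by rw [Finset.sum_const, smul_eq_mul, mul_comm]
    rw [← Nat.cast_sum, h1]
    push_cast
    linarith
  -- exceptional set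
  set E1 := univ.filter (fun v : V => μ^5*N^2/10^4 < ((Unc.filter (fun e => v ∈ e)).card : ℝ))
    with hE1def
  have hE1 : (E1.card : ℝ) ≤ 0.003 * μ^4 * N := by
    have hmark := aux_markov Finset.univ (fun v : V => (Unc.filter (fun e => v ∈ e)).card)
      (μ^5*N^2/10^4)
    have htpos : (0:ℝ) < μ^5*N^2/10^4 := by positivity
    have hkey : 3 * ε * N^3 ≤ (0.003*μ^4*N) * (μ^5*N^2/10^4) := by
      have h9 : ε ≤ μ^9/10^7 := hε
      nlinarith [pow_pos hNpos 3, mul_nonneg (by linarith : (0:ℝ) ≤ μ^9/10^7 - ε)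
        (le_of_lt (pow_pos hNpos 3))]
    have := le_trans hmark (le_trans hUCsum hkey)
    exact le_of_mul_le_mul_right this htpos
  set B := (Finset.univ.filter fun v : V =>
      ((Finset.univ.filter fun x : V =>
          x ≠ v ∧ (1 / 3 + μ / 2) * (n:ℝ) ≤
            ((Finset.univ.filter fun y : V =>
              ({v, x, y} : Finset V) ∈ Green).card : ℝ)).card : ℝ) < (1 / 3 + μ / 2) * (n:ℝ))
    with hBdef
  have hB : μ^4 * N < B.card := hcon
  set B' := B \ E1 with hB'def
  have hB' : 0.99 * μ^4 * N ≤ B'.card := by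
    have hsub : B ⊆ B' ∪ E1 := by
      intro a ha
      rw [Finset.mem_union, hB'def, Finset.mem_sdiff]
      by_cases h : a ∈ E1
      · exact Or.inr h
      · exact Or.inl ⟨ha, h⟩
    have h1 : B.card ≤ B'.card + E1.card :=
      le_trans (Finset.card_le_card hsub) (Finset.card_union_le _ _)
    have h2 : (B.card : ℝ) ≤ (B'.card : ℝ) + (E1.card : ℝ) := by exact_mod_cast h1
    linarith
  set W := (Finset.univ.filter fun v : V =>
      ((Red.filter fun e => v ∈ e).card : ℝ) < ε * n ^ 2) with hWdef
  set W' := W \ E1 with hW'def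
  have hW' : 0.24 * μ * N ≤ W'.card := by
    have hsub : W ⊆ W' ∪ E1 := by
      intro a ha
      rw [Finset.mem_union, hW'def, Finset.mem_sdiff]
      by_cases h : a ∈ E1
      · exact Or.inr h
      · exact Or.inl ⟨ha, h⟩
    have h1 : W.card ≤ W'.card + E1.card :=
      le_trans (Finset.card_le_card hsub) (Finset.card_union_le _ _)
    have h2 : (W.card : ℝ) ≤ (W'.card : ℝ) + (E1.card : ℝ) := by exact_mod_cast h1
    have h3 : μ * N / 4 ≤ (W.card : ℝ) := hspec
    have hμ3 : μ^3 ≤ 1 := pow_le_one₀ hμ0.le (by linarith)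
    nlinarith [mul_nonneg (sub_nonneg.mpr hμ3) (mul_nonneg hμ0.le hNpos.le)]
  -- Y sets for bad vertices
  set Y : V → Finset V := fun v => (Finset.univ.filter (fun x : V =>
      x ≠ v ∧ ¬ ((1 / 3 + μ / 2) * n ≤ ((Finset.univ.filter fun y : V =>
        ({v, x, y} : Finset V) ∈ Green).card : ℝ)))).filter
      (fun z => μ*N/4 < ((Red.filter (fun e => v ∈ e ∧ z ∈ e)).card : ℝ)) with hYdef
  have hYne : ∀ v ∈ B', ∀ z ∈ Y v, z ≠ v := by
    intro v _ z hz
    exact (Finset.mem_filter.mp (Finset.filter_subset _ _ hz)).2.1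
  have hμpow : ∀ k l : ℕ, k ≤ l → μ^l ≤ μ^k :=
    fun k l h => pow_le_pow_of_le_one hμ0.le (by linarith) h
  have hn1 : 1 ≤ n := le_trans (Nat.le_add_left 1 _) hn
  have hYcard : ∀ v ∈ B', (2/3 - 0.51*μ) * N ≤ ((Y v).card : ℝ) := by
    intro v hv
    obtain ⟨hvB, hvE1⟩ := Finset.mem_sdiff.mp hv
    have hUCv : ((Unc.filter (fun e => v ∈ e)).card : ℝ) ≤ μ^5*N^2/10^4 := by
      by_contra h
      exact hvE1 (Finset.mem_filter.mpr ⟨Finset.mem_univ _, lt_of_not_ge h⟩)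
    rw [hBdef, Finset.mem_filter] at hvB
    have hAv := hvB.2
    set p : V → Prop := fun x => (1 / 3 + μ / 2) * (n:ℝ) ≤
        ((Finset.univ.filter fun y : V =>
          ({v, x, y} : Finset V) ∈ Green).card : ℝ) with hpdef
    set s := Finset.univ.filter (fun x : V => x ≠ v) with hsdef
    have hscard : s.card = n - 1 := by
      rw [hsdef, Finset.filter_ne', Finset.card_erase_of_mem (Finset.mem_univ v),
        Finset.card_univ, hcardV]
    have hpart : (s.filter p).card + (s.filter (fun x => ¬ p x)).card = s.card :=
      Finset.card_filter_add_card_filter_not (p := p)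
    have hAeq : (Finset.univ.filter fun x : V => x ≠ v ∧ p x) = s.filter p := by
      rw [hsdef, Finset.filter_filter]
    have hXeq : (Finset.univ.filter fun x : V => x ≠ v ∧ ¬ p x) = s.filter (fun x => ¬ p x) := by
      rw [hsdef, Finset.filter_filter]
    set Xv := Finset.univ.filter (fun x : V => x ≠ v ∧ ¬ p x) with hXvdef
    set Tset := Finset.univ.filter (fun z : V =>
      μ*N/4 < ((Unc.filter (fun e => v ∈ e ∧ z ∈ e)).card : ℝ)) with hTdef
    have hsubXv : Xv ⊆ Y v ∪ Tset := by
      intro x hx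
      have hx' := hx
      rw [hXvdef, Finset.mem_filter] at hx'
      obtain ⟨-, hxv, hnp⟩ := hx'
      rw [Finset.mem_union]
      by_cases hr : μ*N/4 < ((Red.filter (fun e => v ∈ e ∧ x ∈ e)).card : ℝ)
      · left
        exact Finset.mem_filter.mpr ⟨hx, hr⟩
      · right
        have hg : ((Finset.univ.filter fun y : V =>
            ({v, x, y} : Finset V) ∈ Green).card : ℝ) < (1/3+μ/2)*(n:ℝ) := lt_of_not_ge hnp
        have hgG : (Finset.univ.filter fun y : V => ({v, x, y} : Finset V) ∈ Green).card
            = (Green.filter (fun e => v ∈ e ∧ x ∈ e)).card :=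
          aux_third Green hG3 v x (Ne.symm hxv)
        have hdec := aux_decomp E Red Green hRE hGE hdis (fun e => v ∈ e ∧ x ∈ e)
        rw [← hUncDef] at hdec
        have hdecR : ((E.filter (fun e => v ∈ e ∧ x ∈ e)).card : ℝ)
            = ((Red.filter (fun e => v ∈ e ∧ x ∈ e)).card : ℝ)
              + ((Green.filter (fun e => v ∈ e ∧ x ∈ e)).card : ℝ)
              + ((Unc.filter (fun e => v ∈ e ∧ x ∈ e)).card : ℝ) := by exact_mod_cast hdec
        have hcod := hcodeg v x (Ne.symm hxv)
        rw [hgG] at hg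
        rw [Finset.mem_filter]
        refine ⟨Finset.mem_univ _, ?_⟩
        push_neg at hr
        linarith
    have hcards : Xv.card ≤ (Y v).card + Tset.card :=
      le_trans (Finset.card_le_card hsubXv) (Finset.card_union_le _ _)
    have hmark := aux_markov Finset.univ
      (fun z : V => (Unc.filter (fun e => v ∈ e ∧ z ∈ e)).card) (μ*N/4)
    have hsum : ∑ z : V, ((Unc.filter (fun e => v ∈ e ∧ z ∈ e)).card : ℝ)
        = 3 * ((Unc.filter (fun e => v ∈ e)).card : ℝ) := by
      rw [← Nat.cast_sum, hpair Unc hU3 v]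
      push_cast
      ring
    have hT : (Tset.card : ℝ) ≤ 0.0012 * μ^4 * N := by
      rw [hsum] at hmark
      have h2 : (Tset.card : ℝ) * (μ*N/4) ≤ 3 * (μ^5*N^2/10^4) := by linarith
      have h3 : (3:ℝ) * (μ^5*N^2/10^4) = (0.0012 * μ^4 * N) * (μ*N/4) := by ring
      rw [h3] at h2
      exact le_of_mul_le_mul_right h2 (by positivity)
    have hXn : (s.filter p).card + Xv.card = n - 1 := by
      rw [hXeq, hpart, hscard]
    have hXr : ((s.filter p).card : ℝ) + (Xv.card : ℝ) = (n:ℝ) - 1 := by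
      rw [← Nat.cast_add, hXn, Nat.cast_sub hn1, Nat.cast_one]
    rw [hAeq] at hAv
    have hμ3 : μ^3 ≤ 1 := pow_le_one₀ hμ0.le (by linarith)
    have hμN4 : μ^4 * N ≤ μ * N := by nlinarith [mul_nonneg hμ0.le hNpos.le]
    have hYge : (Xv.card : ℝ) - (Tset.card : ℝ) ≤ ((Y v).card : ℝ) := by
      have h2 : (Xv.card : ℝ) ≤ ((Y v).card : ℝ) + (Tset.card : ℝ) := by exact_mod_cast hcards
      linarith
    linarith
  -- good sets for special vertices
  set Good : V → Finset V := fun w => univ.filter (fun v : V =>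
      ((Red.filter (fun e => w ∈ e ∧ v ∈ e)).card : ℝ) ≤ μ*N/8 ∧
      ((Unc.filter (fun e => w ∈ e ∧ v ∈ e)).card : ℝ) ≤ μ*N/8 ∧ v ≠ w) with hGoodDef
  have hGoodCard : ∀ w ∈ W', ((univ \ Good w).card : ℝ) ≤ 0.01 * μ^4 * N := by
    intro w hw
    obtain ⟨hwW, hwE1⟩ := Finset.mem_sdiff.mp hw
    have hUCw : ((Unc.filter (fun e => w ∈ e)).card : ℝ) ≤ μ^5*N^2/10^4 := by
      by_contra h
      exact hwE1 (Finset.mem_filter.mpr ⟨Finset.mem_univ _, lt_of_not_ge h⟩)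
    rw [hWdef, Finset.mem_filter] at hwW
    have hRCw : ((Red.filter (fun e => w ∈ e)).card : ℝ) < ε*N^2 := hwW.2
    set T1 := Finset.univ.filter (fun v : V =>
      μ*N/8 < ((Red.filter (fun e => w ∈ e ∧ v ∈ e)).card : ℝ)) with hT1def
    set T2 := Finset.univ.filter (fun v : V =>
      μ*N/8 < ((Unc.filter (fun e => w ∈ e ∧ v ∈ e)).card : ℝ)) with hT2def
    have hsub : univ \ Good w ⊆ (T1 ∪ T2) ∪ {w} := by
      intro a ha
      rw [Finset.mem_sdiff] at ha
      have hnG := ha.2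
      rw [Finset.mem_union, Finset.mem_union, hT1def, hT2def]
      by_cases h1 : μ*N/8 < ((Red.filter (fun e => w ∈ e ∧ a ∈ e)).card : ℝ)
      · exact Or.inl (Or.inl (Finset.mem_filter.mpr ⟨Finset.mem_univ _, h1⟩))
      by_cases h2 : μ*N/8 < ((Unc.filter (fun e => w ∈ e ∧ a ∈ e)).card : ℝ)
      · exact Or.inl (Or.inr (Finset.mem_filter.mpr ⟨Finset.mem_univ _, h2⟩))
      by_cases h3 : a = w
      · exact Or.inr (Finset.mem_singleton.mpr h3)
      exfalso
      exact hnG (Finset.mem_filter.mpr ⟨Finset.mem_univ _,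
        le_of_not_gt h1, le_of_not_gt h2, h3⟩)
    have hcards : ((univ \ Good w).card : ℝ) ≤ (T1.card : ℝ) + (T2.card : ℝ) + 1 := by
      have h1 : (univ \ Good w).card ≤ (T1 ∪ T2).card + ({w} : Finset V).card :=
        le_trans (Finset.card_le_card hsub) (Finset.card_union_le _ _)
      have h2 : (T1 ∪ T2).card ≤ T1.card + T2.card := Finset.card_union_le _ _
      have h3 : ({w} : Finset V).card = 1 := Finset.card_singleton _
      have h4 : (univ \ Good w).card ≤ T1.card + T2.card + 1 := by omega
      exact_mod_cast h4
    have hmark1 := aux_markov Finset.univ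
      (fun v : V => (Red.filter (fun e => w ∈ e ∧ v ∈ e)).card) (μ*N/8)
    have hsum1 : ∑ v : V, ((Red.filter (fun e => w ∈ e ∧ v ∈ e)).card : ℝ)
        = 3 * ((Red.filter (fun e => w ∈ e)).card : ℝ) := by
      rw [← Nat.cast_sum, hpair Red hR3 w]
      push_cast
      ring
    have hT1 : (T1.card : ℝ) ≤ 0.003 * μ^4 * N := by
      rw [hsum1] at hmark1
      have h2 : (T1.card : ℝ) * (μ*N/8) ≤ 3 * ε * N^2 := by linarith
      have hkey : 3 * ε * N^2 ≤ (0.003 * μ^4 * N) * (μ*N/8) := by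
        have h5 : μ^9 ≤ μ^5 := hμpow 5 9 (by norm_num)
        have h6 : ε ≤ μ^5/10^7 := le_trans hε (by linarith)
        nlinarith [mul_nonneg (by linarith : (0:ℝ) ≤ μ^5/10^7 - ε)
          (le_of_lt (mul_pos hNpos hNpos))]
      have h3 : (T1.card : ℝ) * (μ*N/8) ≤ (0.003 * μ^4 * N) * (μ*N/8) :=
        le_trans h2 hkey
      exact le_of_mul_le_mul_right h3 (by positivity)
    have hmark2 := aux_markov Finset.univ
      (fun v : V => (Unc.filter (fun e => w ∈ e ∧ v ∈ e)).card) (μ*N/8)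
    have hsum2 : ∑ v : V, ((Unc.filter (fun e => w ∈ e ∧ v ∈ e)).card : ℝ)
        = 3 * ((Unc.filter (fun e => w ∈ e)).card : ℝ) := by
      rw [← Nat.cast_sum, hpair Unc hU3 w]
      push_cast
      ring
    have hT2 : (T2.card : ℝ) ≤ 0.0024 * μ^4 * N := by
      rw [hsum2] at hmark2
      have h2 : (T2.card : ℝ) * (μ*N/8) ≤ 3 * (μ^5*N^2/10^4) := by linarith
      have h3 : (3:ℝ) * (μ^5*N^2/10^4) = (0.0024 * μ^4 * N) * (μ*N/8) := by ring
      rw [h3] at h2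
      exact le_of_mul_le_mul_right h2 (by positivity)
    have h1000 : (1:ℝ) ≤ 0.001 * μ^4 * N := by linarith
    linarith
  have hGoodGreen : ∀ w ∈ W', ∀ v ∈ Good w,
      (1/3 + 3*μ/4) * N ≤ ((Green.filter (fun e => w ∈ e ∧ v ∈ e)).card : ℝ) := by
    intro w hw v hv
    rw [hGoodDef] at hv
    obtain ⟨-, hR, hU, hvw⟩ := Finset.mem_filter.mp hv
    have hdec := aux_decomp E Red Green hRE hGE hdis (fun e => w ∈ e ∧ v ∈ e)
    rw [← hUncDef] at hdec
    have hdecR : ((E.filter (fun e => w ∈ e ∧ v ∈ e)).card : ℝ)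
        = ((Red.filter (fun e => w ∈ e ∧ v ∈ e)).card : ℝ)
          + ((Green.filter (fun e => w ∈ e ∧ v ∈ e)).card : ℝ)
          + ((Unc.filter (fun e => w ∈ e ∧ v ∈ e)).card : ℝ) := by exact_mod_cast hdec
    have hcod := hcodeg w v (Ne.symm hvw)
    linarith
  -- the double count
  have hTotalUpper :
      ∑ v ∈ B', ∑ z ∈ Y v,
        ((Red.filter (fun e => v ∈ e ∧ z ∈ e)).card : ℝ) *
          ((Green.filter (fun e => v ∈ e ∧ z ∈ e)).card : ℝ)
        ≤ 2 * ε * N^4 := by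
    have h := aux_touch Red Green hR3 hG3 hdis B' Y hYne
    have h2 : ((∑ v ∈ B', ∑ z ∈ Y v,
        (Red.filter (fun e => v ∈ e ∧ z ∈ e)).card *
          (Green.filter (fun e => v ∈ e ∧ z ∈ e)).card : ℕ) : ℝ)
        ≤ 2 * (((Red ×ˢ Green).filter (fun p => (p.1 ∩ p.2).card = 2)).card : ℝ) := by
      exact_mod_cast h
    have h3 : ∑ v ∈ B', ∑ z ∈ Y v,
        ((Red.filter (fun e => v ∈ e ∧ z ∈ e)).card : ℝ) *
          ((Green.filter (fun e => v ∈ e ∧ z ∈ e)).card : ℝ)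
        = ((∑ v ∈ B', ∑ z ∈ Y v,
        (Red.filter (fun e => v ∈ e ∧ z ∈ e)).card *
          (Green.filter (fun e => v ∈ e ∧ z ∈ e)).card : ℕ) : ℝ) := by
      push_cast
      rfl
    rw [h3]
    linarith
  have hTotalLower :
      0.01 * μ^7 * N^4 ≤
      ∑ v ∈ B', ∑ z ∈ Y v,
        ((Red.filter (fun e => v ∈ e ∧ z ∈ e)).card : ℝ) *
          ((Green.filter (fun e => v ∈ e ∧ z ∈ e)).card : ℝ) := by
    have hper : ∀ v ∈ B', 0.05 * μ^2 * N^2 * ((W'.filter (fun w => v ∈ Good w)).card : ℝ)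
        ≤ ∑ z ∈ Y v, ((Red.filter (fun e => v ∈ e ∧ z ∈ e)).card : ℝ)
            * ((Green.filter (fun e => v ∈ e ∧ z ∈ e)).card : ℝ) := by
      intro v hv
      set Wv := W'.filter (fun w => v ∈ Good w) with hWvdef
      have h1 : (μ*N/4) * ∑ z ∈ Y v, ((Green.filter (fun e => v ∈ e ∧ z ∈ e)).card : ℝ)
          ≤ ∑ z ∈ Y v, ((Red.filter (fun e => v ∈ e ∧ z ∈ e)).card : ℝ)
            * ((Green.filter (fun e => v ∈ e ∧ z ∈ e)).card : ℝ) := by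
        rw [Finset.mul_sum]
        apply Finset.sum_le_sum
        intro z hz
        have hr : μ*N/4 ≤ ((Red.filter (fun e => v ∈ e ∧ z ∈ e)).card : ℝ) :=
          le_of_lt (Finset.mem_filter.mp hz).2
        exact mul_le_mul_of_nonneg_right hr (Nat.cast_nonneg _)
      have h2 : ∀ z ∈ Y v, ((Wv.filter (fun w => ({v, z, w} : Finset V) ∈ Green)).card : ℝ)
          ≤ ((Green.filter (fun e => v ∈ e ∧ z ∈ e)).card : ℝ) := by
        intro z hz
        have hzv : z ≠ v := hYne v hv z hz
        have hthird := aux_third Green hG3 v z (Ne.symm hzv)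
        rw [← hthird]
        exact_mod_cast Finset.card_le_card
          (Finset.filter_subset_filter _ (Finset.subset_univ Wv))
      have h3 : ∑ z ∈ Y v, ((Wv.filter (fun w => ({v, z, w} : Finset V) ∈ Green)).card)
          = ∑ w ∈ Wv, (((Y v).filter (fun z => ({v, z, w} : Finset V) ∈ Green)).card) := by
        simp only [Finset.card_filter]
        exact Finset.sum_comm
      have h4 : ∀ w ∈ Wv, 0.2 * μ * N
          ≤ ((((Y v).filter (fun z => ({v, z, w} : Finset V) ∈ Green))).card : ℝ) := by
        intro w hw
        obtain ⟨hwW', hvG⟩ := Finset.mem_filter.mp hw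
        have hvw : v ≠ w := (Finset.mem_filter.mp hvG).2.2.2
        set Bs := Finset.univ.filter (fun z : V => ({v, z, w} : Finset V) ∈ Green) with hBsdef
        have hsplit : (Y v).filter (fun z => ({v, z, w} : Finset V) ∈ Green) = Y v ∩ Bs := by
          ext a
          simp only [hBsdef, Finset.mem_filter, Finset.mem_inter, Finset.mem_univ, true_and]
        have hiu : (Y v ∩ Bs).card + (Y v ∪ Bs).card = (Y v).card + Bs.card :=
          Finset.card_inter_add_card_union _ _
        have hun : (Y v ∪ Bs).card ≤ n := by
          rw [← hcardV, ← Finset.card_univ]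
          exact Finset.card_le_card (Finset.subset_univ _)
        have hiu' : ((Y v ∩ Bs).card : ℝ) + ((Y v ∪ Bs).card : ℝ)
            = ((Y v).card : ℝ) + (Bs.card : ℝ) := by exact_mod_cast hiu
        have hun' : ((Y v ∪ Bs).card : ℝ) ≤ N := by rw [hN]; exact_mod_cast hun
        -- identify Bs.card with the green codegree of (v,w)
        have hswap : Bs = Finset.univ.filter (fun y : V => ({v, w, y} : Finset V) ∈ Green) := by
          rw [hBsdef]
          apply Finset.filter_congr
          intro z _
          have hzw : ({v, z, w} : Finset V) = {v, w, z} := by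
            ext a
            simp only [Finset.mem_insert, Finset.mem_singleton]
            tauto
          rw [hzw]
        have hthird := aux_third Green hG3 v w hvw
        have hcomm : (Green.filter (fun e => v ∈ e ∧ w ∈ e))
            = (Green.filter (fun e => w ∈ e ∧ v ∈ e)) := by
          apply Finset.filter_congr
          intro e _
          exact ⟨fun h => ⟨h.2, h.1⟩, fun h => ⟨h.2, h.1⟩⟩
        have hBscard : Bs.card = (Green.filter (fun e => w ∈ e ∧ v ∈ e)).card := by
          rw [hswap, hthird, hcomm]
        have hGG := hGoodGreen w hwW' v hvG
        have hYc := hYcard v hv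
        have hBs' : (1/3 + 3*μ/4) * N ≤ (Bs.card : ℝ) := by
          rw [hBscard]
          exact_mod_cast hGG
        rw [hsplit]
        linarith
      -- combine
      have h3' : ∑ z ∈ Y v, ((Wv.filter (fun w => ({v, z, w} : Finset V) ∈ Green)).card : ℝ)
          = ∑ w ∈ Wv, ((((Y v).filter (fun z => ({v, z, w} : Finset V) ∈ Green))).card : ℝ) := by
        rw [← Nat.cast_sum, ← Nat.cast_sum, h3]
      have hSG : 0.2 * μ * N * (Wv.card : ℝ)
          ≤ ∑ z ∈ Y v, ((Green.filter (fun e => v ∈ e ∧ z ∈ e)).card : ℝ) := by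
        calc 0.2 * μ * N * (Wv.card : ℝ) = ∑ _w ∈ Wv, 0.2 * μ * N := by
              rw [Finset.sum_const, nsmul_eq_mul]; ring
          _ ≤ ∑ w ∈ Wv, ((((Y v).filter (fun z => ({v, z, w} : Finset V) ∈ Green))).card : ℝ) :=
              Finset.sum_le_sum h4
          _ = ∑ z ∈ Y v, ((Wv.filter (fun w => ({v, z, w} : Finset V) ∈ Green)).card : ℝ) :=
              h3'.symm
          _ ≤ ∑ z ∈ Y v, ((Green.filter (fun e => v ∈ e ∧ z ∈ e)).card : ℝ) :=
              Finset.sum_le_sum h2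
      calc 0.05 * μ^2 * N^2 * (Wv.card : ℝ)
          = (μ*N/4) * (0.2 * μ * N * (Wv.card : ℝ)) := by ring
        _ ≤ (μ*N/4) * ∑ z ∈ Y v, ((Green.filter (fun e => v ∈ e ∧ z ∈ e)).card : ℝ) :=
            mul_le_mul_of_nonneg_left hSG (by positivity)
        _ ≤ _ := h1
    -- outer sums
    have hswapsum : ∑ v ∈ B', ((W'.filter (fun w => v ∈ Good w)).card : ℝ)
        = ∑ w ∈ W', ((B'.filter (fun v => v ∈ Good w)).card : ℝ) := by
      rw [← Nat.cast_sum, ← Nat.cast_sum]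
      congr 1
      simp only [Finset.card_filter]
      exact Finset.sum_comm
    have hperw : ∀ w ∈ W', 0.98 * μ^4 * N ≤ ((B'.filter (fun v => v ∈ Good w)).card : ℝ) := by
      intro w hw
      have hGc := hGoodCard w hw
      have hsubB : B' ⊆ (B'.filter (fun v => v ∈ Good w)) ∪ (univ \ Good w) := by
        intro a ha
        by_cases h : a ∈ Good w
        · exact Finset.mem_union_left _ (Finset.mem_filter.mpr ⟨ha, h⟩)
        · exact Finset.mem_union_right _ (Finset.mem_sdiff.mpr ⟨Finset.mem_univ _, h⟩)
      have hc : B'.card ≤ (B'.filter (fun v => v ∈ Good w)).card + (univ \ Good w).card :=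
        le_trans (Finset.card_le_card hsubB) (Finset.card_union_le _ _)
      have hc' : (B'.card : ℝ) ≤ ((B'.filter (fun v => v ∈ Good w)).card : ℝ)
          + ((univ \ Good w).card : ℝ) := by exact_mod_cast hc
      linarith
    have hS : 0.98 * μ^4 * N * (W'.card : ℝ)
        ≤ ∑ v ∈ B', ((W'.filter (fun w => v ∈ Good w)).card : ℝ) := by
      rw [hswapsum]
      calc 0.98 * μ^4 * N * (W'.card : ℝ) = ∑ _w ∈ W', 0.98 * μ^4 * N := by
            rw [Finset.sum_const, nsmul_eq_mul]; ring
        _ ≤ _ := Finset.sum_le_sum hperw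
    have hTot1 : 0.05 * μ^2 * N^2 * ∑ v ∈ B', ((W'.filter (fun w => v ∈ Good w)).card : ℝ)
        ≤ ∑ v ∈ B', ∑ z ∈ Y v,
          ((Red.filter (fun e => v ∈ e ∧ z ∈ e)).card : ℝ) *
            ((Green.filter (fun e => v ∈ e ∧ z ∈ e)).card : ℝ) := by
      rw [Finset.mul_sum]
      exact Finset.sum_le_sum hper
    have hWlow : 0.98 * μ^4 * N * (0.24 * μ * N) ≤ 0.98 * μ^4 * N * (W'.card : ℝ) :=
      mul_le_mul_of_nonneg_left hW' (by positivity)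
    have hfin : 0.05 * μ^2 * N^2 * (0.98 * μ^4 * N * (0.24 * μ * N))
        ≤ 0.05 * μ^2 * N^2 * ∑ v ∈ B', ((W'.filter (fun w => v ∈ Good w)).card : ℝ) :=
      mul_le_mul_of_nonneg_left (le_trans hWlow hS) (by positivity)
    have hnum : 0.01 * μ^7 * N^4 ≤ 0.05 * μ^2 * N^2 * (0.98 * μ^4 * N * (0.24 * μ * N)) := by
      have h0 : (0:ℝ) ≤ μ^7 * N^4 := by positivity
      nlinarith
    linarith
  have hcontra : 2 * ε * N^4 < 0.01 * μ^7 * N^4 := by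
    have hμ9 : μ^9 ≤ μ^7 :=
      pow_le_pow_of_le_one (le_of_lt hμ0) (by linarith) (by norm_num)
    have h2 : (0:ℝ) < N^4 := pow_pos hNpos 4
    have h3 : (0:ℝ) < 0.01*μ^7 - 2*ε := by
      have := pow_pos hμ0 7
      linarith
    nlinarith [mul_pos h3 h2]
  linarith
end
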